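/- arXiv:2304.06620 — 11 statements merged into one kernel-verified Lean document; each statement's English description precedes it below -/
import Mathlib

section
/- For all natural numbers n ≥ 1, if p rows, p columns, p sum-diagonals and p difference-diagonals together cover every cell of an n × n board, then p ≥ (n-1)/2. -/
/-!
Delete the covered rows and columns: at least `n - p` columns `A` and `n - p` rows `B` survive,
and the grid `A × B` is covered by at most `p` sum- and `p` difference-diagonals. The product `P`
of the equations of these `N ≤ 2p` diagonals vanishes on `A × B`, so by the Combinatorial
Nullstellensatz its coefficients of `x^α y^(N-α)` vanish for all `α < |A|`, `N - α < |B|`.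
These top-degree coefficients are those of `(x+y)^M (x-y)^K`, i.e. the coefficients of
`f = (t+1)^M (t-1)^K`. Since `(t²-1) f' = ((M+K) t + (K-M)) f`, two consecutive vanishing
coefficients of `f` would propagate up to its leading coefficient `1`; so the window of
admissible `α` has at most one element, which gives `|A| + |B| ≤ N + 2`.
-/

open Finset

namespace Polynomial

variable {R : Type*} [CommRing R]

theorem X_add_C_mul_derivative_X_add_C_pow (c : R) (m : ℕ) :
    (X + C c) * derivative ((X + C c) ^ m) = C (m : R) * (X + C c) ^ m := by
  cases m with
  | zero => simp
  | succ m => rw [derivative_X_add_C_pow, Nat.add_sub_cancel, pow_succ]; ring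

theorem X_sq_sub_one_mul_derivative_X_add_one_pow_mul_X_sub_one_pow (M K : ℕ) :
    (X ^ 2 - 1) * derivative ((X + 1) ^ M * (X - 1) ^ K : R[X]) =
      (C ((M : R) + K) * X + C ((K : R) - M)) * ((X + 1) ^ M * (X - 1) ^ K) := by
  have hM := X_add_C_mul_derivative_X_add_C_pow (1 : R) M
  have hK := X_add_C_mul_derivative_X_add_C_pow (-1 : R) K
  simp only [map_one, map_neg, ← sub_eq_add_neg] at hM hK
  rw [derivative_mul, map_add, map_sub]
  linear_combination ((X - 1) * (X - 1) ^ K) * hM + ((X + 1) * (X + 1) ^ M) * hK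

theorem coeff_add_two_eq_zero_of_X_sq_sub_one_mul_derivative_eq [IsDomain R] [CharZero R]
    {f : R[X]} {a b : R} (hf : (X ^ 2 - 1) * derivative f = (C a * X + C b) * f) {i : ℕ}
    (h0 : f.coeff i = 0) (h1 : f.coeff (i + 1) = 0) : f.coeff (i + 2) = 0 := by
  have h := congrArg (coeff · (i + 1)) hf
  rcases i with _ | i
  · simpa [sub_mul, add_mul, coeff_derivative, coeff_X_pow_mul', h0, h1, mul_assoc] using h
  · have hi : (i : R) + 1 + 1 + 1 ≠ 0 := by exact_mod_cast (i + 2).succ_ne_zero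
    simpa [sub_mul, add_mul, coeff_derivative, coeff_X_pow_mul', h0, h1, mul_assoc, hi] using h

theorem coeff_eq_zero_of_le_of_X_sq_sub_one_mul_derivative_eq [IsDomain R] [CharZero R]
    {f : R[X]} {a b : R} (hf : (X ^ 2 - 1) * derivative f = (C a * X + C b) * f) {i : ℕ}
    (h0 : f.coeff i = 0) (h1 : f.coeff (i + 1) = 0) {j : ℕ} (hij : i ≤ j) : f.coeff j = 0 := by
  have hpair : ∀ t, f.coeff (i + t) = 0 ∧ f.coeff (i + t + 1) = 0 := by
    intro t
    induction t with
    | zero => exact ⟨h0, h1⟩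
    | succ t ih =>
      exact ⟨ih.2, coeff_add_two_eq_zero_of_X_sq_sub_one_mul_derivative_eq hf ih.1 ih.2⟩
  obtain ⟨t, rfl⟩ := Nat.exists_eq_add_of_le hij
  exact (hpair t).1

variable [IsDomain R]

theorem natDegree_X_add_one_pow_mul_X_sub_one_pow (M K : ℕ) :
    ((X + 1) ^ M * (X - 1) ^ K : R[X]).natDegree = M + K := by
  compute_degree!

theorem coeff_zero_X_add_one_pow_mul_X_sub_one_pow_ne_zero (M K : ℕ) :
    ((X + 1) ^ M * (X - 1) ^ K : R[X]).coeff 0 ≠ 0 := by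
  simp [coeff_zero_eq_eval_zero]

theorem coeff_X_add_one_pow_mul_X_sub_one_pow_ne_zero_or [CharZero R] (M K : ℕ) {i : ℕ}
    (hi : i ≤ M + K) :
    ((X + 1) ^ M * (X - 1) ^ K : R[X]).coeff i ≠ 0 ∨
      ((X + 1) ^ M * (X - 1) ^ K : R[X]).coeff (i + 1) ≠ 0 := by
  have hmonic : ((X + 1) ^ M * (X - 1) ^ K : R[X]).Monic :=
    ((monic_X_add_C 1).pow M).mul ((monic_X_sub_C 1).pow K)
  by_contra! h
  have htop := coeff_eq_zero_of_le_of_X_sq_sub_one_mul_derivative_eq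
    (X_sq_sub_one_mul_derivative_X_add_one_pow_mul_X_sub_one_pow M K) h.1 h.2 hi
  rw [← natDegree_X_add_one_pow_mul_X_sub_one_pow (R := R), hmonic.coeff_natDegree] at htop
  exact one_ne_zero htop

end Polynomial

namespace MvPolynomial

variable {σ R : Type*} [CommRing R]

theorem coeff_eq_zero_of_eval_eq_zero_on_grid [Finite σ] [IsDomain R] {f : MvPolynomial σ R}
    {t : σ →₀ ℕ} (hdeg : f.totalDegree ≤ t.degree) (S : σ → Finset R) (htS : ∀ i, t i < #(S i))
    (hf : ∀ s : σ → R, (∀ i, s i ∈ S i) → eval s f = 0) : f.coeff t = 0 := by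
  by_contra ht
  obtain ⟨s, hs, hne⟩ := combinatorial_nullstellensatz_exists_eval_nonzero f t ht
    (hdeg.antisymm (le_totalDegree (mem_support_iff.mpr ht))) S htS
  exact hne (hf s hs)

theorem totalDegree_prod_le_card {ι : Type*} (T : Finset ι) {f : ι → MvPolynomial σ R}
    (hf : ∀ i ∈ T, (f i).totalDegree ≤ 1) : (∏ i ∈ T, f i).totalDegree ≤ #T := by
  calc (∏ i ∈ T, f i).totalDegree ≤ ∑ i ∈ T, (f i).totalDegree := totalDegree_finsetProd _ _
    _ ≤ ∑ _i ∈ T, 1 := sum_le_sum hf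
    _ = #T := by simp

theorem coeff_prod_sub_C_of_card_le_degree {ι : Type*} (T : Finset ι) {L : ι → MvPolynomial σ R}
    (hL : ∀ i ∈ T, (L i).totalDegree ≤ 1) (c : ι → R) {d : σ →₀ ℕ} (hd : #T ≤ d.degree) :
    coeff d (∏ i ∈ T, (L i - C (c i))) = coeff d (∏ i ∈ T, L i) := by
  classical
  simp_rw [sub_eq_add_neg, ← map_neg C, prod_add, ← map_prod C, mul_comm _ (C _), coeff_sum,
    coeff_C_mul]
  refine (sum_eq_single T (fun t htT htne => ?_) (by simp)).trans (by simp)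
  have ht : #t < #T := card_lt_card (ssubset_of_subset_of_ne (mem_powerset.mp htT) htne)
  have hdeg : (∏ i ∈ t, L i).totalDegree < d.degree :=
    ((totalDegree_prod_le_card t fun i hi => hL i (mem_powerset.mp htT hi)).trans_lt ht).trans_le hd
  rw [coeff_eq_zero_of_totalDegree_lt hdeg, mul_zero]

theorem IsHomogeneous.coeff_single_add_single {φ : MvPolynomial (Fin 2) R} {n : ℕ}
    (hφ : φ.IsHomogeneous n) {α β : ℕ} (h : α + β = n) :
    coeff (Finsupp.single 0 α + Finsupp.single 1 β) φ =
      (MvPolynomial.aeval ![(Polynomial.X : Polynomial R), 1] φ).coeff α := by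
  rw [aeval_def, eval₂_eq', Polynomial.finsetSum_coeff]
  simp only [Fin.prod_univ_two, Matrix.cons_val_zero, Matrix.cons_val_one, one_pow, mul_one,
    Polynomial.algebraMap_eq, Polynomial.coeff_C_mul_X_pow]
  symm
  refine (sum_eq_single (Finsupp.single 0 α + Finsupp.single 1 β)
    (fun d hd hne => if_neg fun hα => hne ?_) (fun hu => ?_)).trans (by simp)
  · have hdeg : d 0 + d 1 = n := by
      rw [hφ.degree_eq_sum_deg_support hd, ← Finsupp.degree_apply, Finsupp.degree_eq_sum,
        Fin.sum_univ_two]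
    ext i
    fin_cases i <;> simp <;> omega
  · simp [notMem_support_iff.mp hu]

end MvPolynomial

section Diagonals

open MvPolynomial

variable {R : Type*} [CommRing R]

noncomputable def diagonalsPolynomial (S D : Finset R) : MvPolynomial (Fin 2) R :=
  (∏ s ∈ S, (X 0 + X 1 - C s)) * ∏ d ∈ D, (X 0 - X 1 - C d)

/-- `inl s` indexes the diagonal `x + y = s` and `inr d` the diagonal `x - y = d`. -/
noncomputable def diagonalLinearForm : R ⊕ R → MvPolynomial (Fin 2) R :=
  Sum.elim (fun _ => X 0 + X 1) (fun _ => X 0 - X 1)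

theorem diagonalsPolynomial_eq_prod_disjSum (S D : Finset R) :
    diagonalsPolynomial S D =
      ∏ i ∈ S.disjSum D, (diagonalLinearForm i - C (Sum.elim id id i)) := by
  rw [prod_disjSum]
  rfl

theorem isHomogeneous_diagonalLinearForm (i : R ⊕ R) : (diagonalLinearForm i).IsHomogeneous 1 := by
  rcases i with _ | _
  · exact (isHomogeneous_X R 0).add (isHomogeneous_X R 1)
  · exact (isHomogeneous_X R 0).sub (isHomogeneous_X R 1)

theorem eval_diagonalsPolynomial_eq_zero {S D : Finset R} {x : Fin 2 → R}
    (hx : x 0 + x 1 ∈ S ∨ x 0 - x 1 ∈ D) : eval x (diagonalsPolynomial S D) = 0 := by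
  rcases hx with hx | hx <;> simp [diagonalsPolynomial, prod_eq_zero hx]

theorem totalDegree_diagonalsPolynomial_le (S D : Finset R) :
    (diagonalsPolynomial S D).totalDegree ≤ #S + #D := by
  rw [diagonalsPolynomial_eq_prod_disjSum, ← card_disjSum]
  exact totalDegree_prod_le_card _ fun i _ =>
    (totalDegree_sub_C_le _ _).trans (isHomogeneous_diagonalLinearForm i).totalDegree_le

theorem coeff_diagonalsPolynomial (S D : Finset R) {α β : ℕ} (h : α + β = #S + #D) :
    coeff (Finsupp.single 0 α + Finsupp.single 1 β) (diagonalsPolynomial S D) =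
      ((Polynomial.X + 1) ^ #S * (Polynomial.X - 1) ^ #D : Polynomial R).coeff α := by
  rw [diagonalsPolynomial_eq_prod_disjSum, coeff_prod_sub_C_of_card_le_degree _
    (fun i _ => (isHomogeneous_diagonalLinearForm i).totalDegree_le) _ (by simp [h]),
    (IsHomogeneous.prod _ _ _ fun i _ => isHomogeneous_diagonalLinearForm i).coeff_single_add_single
      (by simpa using h)]
  simp [diagonalLinearForm, prod_disjSum]

theorem card_add_card_le_of_forall_add_mem_or_sub_mem [IsDomain R] [CharZero R]
    {A B S D : Finset R} (hA : A.Nonempty) (hB : B.Nonempty)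
    (hcov : ∀ x ∈ A, ∀ y ∈ B, x + y ∈ S ∨ x - y ∈ D) : #A + #B ≤ #S + #D + 2 := by
  set f : Polynomial R := (Polynomial.X + 1) ^ #S * (Polynomial.X - 1) ^ #D
  have hzero : ∀ α ≤ #S + #D, α < #A → #S + #D - α < #B → f.coeff α = 0 := by
    intro α hαN hαA hβB
    rw [← coeff_diagonalsPolynomial S D (Nat.add_sub_cancel' hαN)]
    refine coeff_eq_zero_of_eval_eq_zero_on_grid ?_ ![A, B] ?_
      fun x hx => eval_diagonalsPolynomial_eq_zero (hcov _ (hx 0) _ (hx 1))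
    · rw [map_add, Finsupp.degree_single, Finsupp.degree_single, Nat.add_sub_cancel' hαN]
      exact totalDegree_diagonalsPolynomial_le S D
    · simp [Fin.forall_fin_two, hαA, hβB]
  by_contra! hlt
  have := hA.card_pos
  have := hB.card_pos
  -- `lo` is the least admissible exponent of `x`; as `#A + #B > #S + #D + 2`, so is `lo + 1`.
  set lo := #S + #D + 1 - #B
  have hlo : f.coeff lo = 0 := hzero lo (by omega) (by omega) (by omega)
  have hlo0 : lo ≠ 0 := fun h =>
    Polynomial.coeff_zero_X_add_one_pow_mul_X_sub_one_pow_ne_zero #S #D (h ▸ hlo)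
  have hlo1 : f.coeff (lo + 1) ≠ 0 :=
    (Polynomial.coeff_X_add_one_pow_mul_X_sub_one_pow_ne_zero_or #S #D (by omega)).resolve_left
      (not_not.mpr hlo)
  have hdeg : lo + 1 ≤ #S + #D :=
    Polynomial.natDegree_X_add_one_pow_mul_X_sub_one_pow (R := R) #S #D ▸
      Polynomial.le_natDegree_of_ne_zero hlo1
  exact hlo1 (hzero (lo + 1) hdeg (by omega) (by omega))

end Diagonals

theorem Finset.card_sub_card_le_card_sdiff_image {α ι : Type*} [DecidableEq α] [Fintype ι]
    (s : Finset α) (f : ι → α) : #s - Fintype.card ι ≤ #(s \ univ.image f) :=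
  (Nat.sub_le_sub_left card_image_le _).trans (le_card_sdiff _ _)

theorem relaxed_queens_square_lower_bound_general (n p : ℕ)
    (R C : Fin p → ℕ) (S D : Fin p → ℤ)
    (hcover : ∀ x y : ℕ, x < n → y < n →
      ∃ i : Fin p, y = R i ∨ x = C i ∨ (x : ℤ) + y = S i ∨ (x : ℤ) - y = D i) :
    2 * p ≥ n - 1 := by
  classical
  rcases le_or_gt n p with hnp | hpn
  · omega
  set A : Finset ℤ := (range n \ univ.image C).image (↑)
  set B : Finset ℤ := (range n \ univ.image R).image (↑)
  have hA : n - p ≤ #A := by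
    simpa [A, card_image_of_injective _ Nat.cast_injective] using
      card_sub_card_le_card_sdiff_image (range n) C
  have hB : n - p ≤ #B := by
    simpa [B, card_image_of_injective _ Nat.cast_injective] using
      card_sub_card_le_card_sdiff_image (range n) R
  have hcov : ∀ x ∈ A, ∀ y ∈ B, x + y ∈ univ.image S ∨ x - y ∈ univ.image D := by
    simp only [A, B, mem_image, mem_sdiff, mem_range, mem_univ, true_and, not_exists,
      forall_exists_index, and_imp]
    rintro _ x hx hxC rfl _ y hy hyR rfl
    obtain ⟨i, hi | hi | hi | hi⟩ := hcover x y hx hy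
    · exact absurd hi.symm (hyR i)
    · exact absurd hi.symm (hxC i)
    · exact .inl ⟨i, hi.symm⟩
    · exact .inr ⟨i, hi.symm⟩
  have hAB := card_add_card_le_of_forall_add_mem_or_sub_mem
    (card_pos.mp (by omega)) (card_pos.mp (by omega)) hcov
  have hS : #(univ.image S) ≤ p := card_image_le.trans (by simp)
  have hD : #(univ.image D) ≤ p := card_image_le.trans (by simp)
  omega

/-- If `p` rows, `p` columns, `p` sum-diagonals and `p` difference-diagonals
cover every cell of the `n × n` board (`n ≥ 1`), then `p ≥ (n-1)/2`,
i.e. `2*p ≥ n - 1`. -/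
theorem relaxed_queens_square_lower_bound (n p : ℕ) (hn : 1 ≤ n)
    (R C : Fin p → ℕ) (S D : Fin p → ℤ)
    (hcover : ∀ x y : ℕ, x < n → y < n →
      ∃ i : Fin p, y = R i ∨ x = C i ∨ (x : ℤ) + y = S i ∨ (x : ℤ) - y = D i) :
    2 * p ≥ n - 1 :=
  relaxed_queens_square_lower_bound_general n p R C S D hcover
end

section
/- For all natural numbers n with n ≡ 1 (mod 4), if p rows, p columns, p sum-diagonals and p difference-diagonals together cover every cell of the n × n board, then p ≥ (n+1)/2. -/
/-!
Suppose `p < (n + 1) / 2`. Then `p ≤ 2 * r` and `2 * r + p < n` for some `r` (for odd `p` this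
needs `n ≠ 2 * p + 1`, which is where `n ≡ 1 [MOD 4]` enters), so the columns and the rows missed
by the chosen ones form a grid of size at least `(2r + 1) × (2r + 1)` that the `p` sum- and `p`
difference-diagonals alone must cover. Take monic `f`, `g` of degree `2r` vanishing at the sums
resp. differences. Then `f (x + y) * g (x - y)` vanishes on the grid, has total degree `4r`, and
its coefficient of `x ^ (2r) * y ^ (2r)` is that of `(x ^ 2 - y ^ 2) ^ (2r)`, namely
`± choose (2r) r ≠ 0`, contradicting the Combinatorial Nullstellensatz.
-/

open Finset MvPolynomial
open scoped Polynomial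

theorem Polynomial.exists_monic_natDegree_eq_forall_eval_eq_zero {R : Type*} [CommRing R]
    [Nontrivial R] (S : Finset R) {m : ℕ} (hm : #S ≤ m) :
    ∃ f : R[X], f.Monic ∧ f.natDegree = m ∧ ∀ s ∈ S, f.eval s = 0 := by
  have hprod : (∏ s ∈ S, (X - C s)).Monic := monic_prod_of_monic _ _ fun s _ => monic_X_sub_C s
  refine ⟨X ^ (m - #S) * ∏ s ∈ S, (X - C s), (monic_X_pow _).mul hprod, ?_, fun s hs => ?_⟩
  · rw [(monic_X_pow _).natDegree_mul hprod, natDegree_X_pow,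
      natDegree_finsetProd_X_sub_C_eq_card]
    omega
  · rw [eval_mul, eval_prod, Finset.prod_eq_zero hs (by simp), mul_zero]

namespace MvPolynomial

variable {σ R : Type*} [CommRing R]

theorem eval_polynomial_aeval (s : σ → R) (L : MvPolynomial σ R) (f : R[X]) :
    eval s (Polynomial.aeval L f) = f.eval (eval s L) :=
  (Polynomial.aeval_algHom_apply (MvPolynomial.aeval s) L f).symm

theorem totalDegree_polynomial_aeval_le {L : MvPolynomial σ R} (hL : L.totalDegree ≤ 1)
    (f : R[X]) : (Polynomial.aeval L f).totalDegree ≤ f.natDegree := by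
  rw [Polynomial.aeval_eq_sum_range]
  refine (totalDegree_finsetSum _ _).trans (Finset.sup_le fun i hi => ?_)
  have hi : i ≤ f.natDegree := Nat.lt_succ_iff.1 (Finset.mem_range.1 hi)
  calc (f.coeff i • L ^ i).totalDegree ≤ (L ^ i).totalDegree := totalDegree_smul_le _ _
    _ ≤ i * L.totalDegree := totalDegree_pow _ _
    _ ≤ f.natDegree := by nlinarith

theorem coeff_polynomial_aeval_mul_polynomial_aeval {L₁ L₂ : MvPolynomial σ R}
    (h₁ : L₁.IsHomogeneous 1) (h₂ : L₂.IsHomogeneous 1) (f g : R[X]) {t : σ →₀ ℕ}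
    (ht : t.degree = f.natDegree + g.natDegree) :
    coeff t (Polynomial.aeval L₁ f * Polynomial.aeval L₂ g) =
      f.leadingCoeff * g.leadingCoeff * coeff t (L₁ ^ f.natDegree * L₂ ^ g.natDegree) := by
  have hterm : ∀ i j, coeff t ((f.coeff i • L₁ ^ i) * (g.coeff j • L₂ ^ j)) =
      f.coeff i * g.coeff j * coeff t (L₁ ^ i * L₂ ^ j) := fun i j => by
    rw [smul_mul_smul_comm, coeff_smul, smul_eq_mul]
  simp only [Polynomial.aeval_eq_sum_range, Finset.sum_mul_sum, coeff_sum, hterm]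
  -- `L₁ ^ i * L₂ ^ j` is homogeneous of degree `i + j`, so only the top term reaches `t`
  refine (Finset.sum_eq_single_of_mem _ (by simp) fun i hi hi_ne => ?_).trans
    (Finset.sum_eq_single_of_mem _ (by simp) fun j hj hj_ne => ?_)
  · refine Finset.sum_eq_zero fun j hj => ?_
    rw [((h₁.pow i).mul (h₂.pow j)).coeff_eq_zero, mul_zero]
    simp only [Finset.mem_range] at hi hj
    omega
  · rw [((h₁.pow _).mul (h₂.pow j)).coeff_eq_zero, mul_zero]
    simp only [Finset.mem_range] at hj
    omega

theorem coeff_add_X_pow_mul_sub_X_pow (r : ℕ) :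
    coeff (Finsupp.single 0 (2 * r) + Finsupp.single 1 (2 * r))
      ((X 0 + X 1) ^ (2 * r) * (X 0 - X 1) ^ (2 * r) : MvPolynomial (Fin 2) R) =
      (-1) ^ r * (2 * r).choose r := by
  have hexp : ((X 0 + X 1) ^ (2 * r) * (X 0 - X 1) ^ (2 * r) : MvPolynomial (Fin 2) R) =
      ∑ j ∈ range (2 * r + 1), monomial
        (Finsupp.single 0 (2 * j) + Finsupp.single 1 (2 * (2 * r - j)))
        ((-1) ^ (2 * r - j) * ((2 * r).choose j : R)) := by
    rw [← mul_pow, show (X 0 + X 1) * (X 0 - X 1) = (X 0 ^ 2 + -X 1 ^ 2 : MvPolynomial (Fin 2) R)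
      by ring, add_pow]
    refine Finset.sum_congr rfl fun j _ => ?_
    calc (X 0 ^ 2) ^ j * (-X 1 ^ 2) ^ (2 * r - j) * ((2 * r).choose j : MvPolynomial (Fin 2) R)
        = C ((-1) ^ (2 * r - j) * ((2 * r).choose j : R)) *
            (X 0 ^ (2 * j) * X 1 ^ (2 * (2 * r - j))) := by
          simp only [map_mul, map_pow, map_neg, map_one, map_natCast]
          ring
      _ = _ := by
          rw [X_pow_eq_monomial, X_pow_eq_monomial, monomial_mul, C_mul_monomial, mul_one,
            mul_one]
  rw [hexp, coeff_sum, Finset.sum_eq_single_of_mem r (mem_range.2 (by omega))]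
  · rw [coeff_monomial, if_pos (by congr 2; omega), show 2 * r - r = r by omega]
  · intro j _ hj
    rw [coeff_monomial, if_neg]
    intro h
    have := congrArg (· 0) h
    simp only [Finsupp.add_apply, Finsupp.single_eq_same, Finsupp.single_apply, one_ne_zero,
      if_false] at this
    omega

end MvPolynomial

theorem exists_add_notMem_and_sub_notMem {R : Type*} [CommRing R] [IsDomain R] [CharZero R]
    {r : ℕ} {A B S D : Finset R} (hA : 2 * r < #A) (hB : 2 * r < #B) (hS : #S ≤ 2 * r)
    (hD : #D ≤ 2 * r) : ∃ a ∈ A, ∃ b ∈ B, a + b ∉ S ∧ a - b ∉ D := by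
  obtain ⟨f, hf, hf_deg, hf_zero⟩ := Polynomial.exists_monic_natDegree_eq_forall_eval_eq_zero S hS
  obtain ⟨g, hg, hg_deg, hg_zero⟩ := Polynomial.exists_monic_natDegree_eq_forall_eval_eq_zero D hD
  have hsum : (X 0 + X 1 : MvPolynomial (Fin 2) R).IsHomogeneous 1 :=
    (isHomogeneous_X _ 0).add (isHomogeneous_X _ 1)
  have hdiff : (X 0 - X 1 : MvPolynomial (Fin 2) R).IsHomogeneous 1 :=
    (isHomogeneous_X _ 0).sub (isHomogeneous_X _ 1)
  set P := Polynomial.aeval (X 0 + X 1 : MvPolynomial (Fin 2) R) f *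
    Polynomial.aeval (X 0 - X 1) g
  set t : Fin 2 →₀ ℕ := Finsupp.single 0 (2 * r) + Finsupp.single 1 (2 * r)
  have ht : t.degree = f.natDegree + g.natDegree := by
    rw [map_add, Finsupp.degree_single, Finsupp.degree_single, hf_deg, hg_deg]
  have hcoeff : coeff t P ≠ 0 := by
    rw [coeff_polynomial_aeval_mul_polynomial_aeval hsum hdiff f g ht, hf.leadingCoeff,
      hg.leadingCoeff, hf_deg, hg_deg, one_mul, one_mul, coeff_add_X_pow_mul_sub_X_pow]
    exact mul_ne_zero (pow_ne_zero _ (neg_ne_zero.2 one_ne_zero))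
      (Nat.cast_ne_zero.2 (Nat.choose_pos (by omega)).ne')
  have hdeg : P.totalDegree = t.degree := by
    refine le_antisymm ?_ (le_totalDegree (mem_support_iff.2 hcoeff))
    rw [ht]
    exact (totalDegree_mul _ _).trans (add_le_add
      (totalDegree_polynomial_aeval_le hsum.totalDegree_le f)
      (totalDegree_polynomial_aeval_le hdiff.totalDegree_le g))
  obtain ⟨s, hs, hPs⟩ := combinatorial_nullstellensatz_exists_eval_nonzero P t hcoeff hdeg ![A, B]
    (by intro i; fin_cases i <;> simpa [t])
  simp only [P, eval_mul, eval_polynomial_aeval, map_add, map_sub, eval_X] at hPs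
  exact ⟨s 0, hs 0, s 1, hs 1, fun h => hPs (by rw [hf_zero _ h, zero_mul]),
    fun h => hPs (by rw [hg_zero _ h, mul_zero])⟩

/-- If `n ≡ 1 [MOD 4]` and `p` rows, `p` columns, `p` sum-diagonals and
`p` difference-diagonals cover the `n × n` board, then `p ≥ (n+1)/2`. -/
theorem relaxed_queens_square_lower_bound_one_mod_four (n p : ℕ) (hn : n % 4 = 1)
    (R C : Fin p → ℕ) (S D : Fin p → ℤ)
    (hcover : ∀ x y : ℕ, x < n → y < n →
      ∃ i : Fin p, y = R i ∨ x = C i ∨ (x : ℤ) + y = S i ∨ (x : ℤ) - y = D i) :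
    p ≥ (n + 1) / 2 := by
  by_contra! hp
  obtain ⟨r, hpr, hrn⟩ : ∃ r, p ≤ 2 * r ∧ 2 * r + p < n := ⟨(p + 1) / 2, by omega, by omega⟩
  have hfree (L : Fin p → ℕ) : 2 * r < #((range n \ univ.image L).image (Nat.cast : ℕ → ℤ)) := by
    rw [card_image_of_injective _ Nat.cast_injective]
    have h₁ := le_card_sdiff (univ.image L) (range n)
    have h₂ : #(univ.image L) ≤ p := card_image_le.trans (by simp)
    rw [card_range] at h₁
    omega
  have hlines (L : Fin p → ℤ) : #(univ.image L) ≤ 2 * r :=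
    card_image_le.trans (by simpa using hpr)
  obtain ⟨a, ha, b, hb, hS, hD⟩ :=
    exists_add_notMem_and_sub_notMem (hfree C) (hfree R) (hlines S) (hlines D)
  simp only [mem_image, mem_sdiff, mem_range, mem_univ, true_and, not_exists] at ha hb hS hD
  obtain ⟨x, ⟨hxn, hxC⟩, rfl⟩ := ha
  obtain ⟨y, ⟨hyn, hyR⟩, rfl⟩ := hb
  obtain ⟨i, hi | hi | hi | hi⟩ := hcover x y hxn hyn
  · exact hyR i hi.symm
  · exact hxC i hi.symm
  · exact hS i hi.symm
  · exact hD i hi.symm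
end

section
/- For every natural number k ≥ 1, it is impossible to cover the (2k−1) × (2k−1) board using at most 2k−2 sum diagonals and at most 2k−2 difference diagonals. Equivalently, α(B_{(2k−1)×(2k−1)}) ≥ 2k−1. -/
/-!
Index the diagonals of the `(2n+1) × (2n+1)` board by `u = x + y - 2n` and `v = x - y`, both in
`[-2n, 2n]`; a pair `(u, v)` is a cell iff `u ≡ v (mod 2)` and `|u| + |v| ≤ 2n`. With at most `2n`
diagonals of each kind, at least `2n + 1` values `u` and `2n + 1` values `v` are unused, and we
show that some unused pair forms a cell. If not, let `b_r` be the least `|v|` over unused `v` of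
parity `r` (or `2n + 2 - r` if there is none); then every unused `u` of parity `r` has
`|u| ≥ 2n + 2 - b_r`. Counting, at most `b_0 + b_1 - 1` values `u` and at most
`4n + 3 - b_0 - b_1` values `v` are unused; since `b_0 + b_1` is odd, these cannot both be at
least `2n + 1`.
-/

open Finset

lemma card_le_of_forall_abs_mem_Icc_of_emod_two_eq (W : Finset ℤ) (c m : ℤ)
    (hW : ∀ t ∈ W, c ≤ |t| ∧ |t| ≤ m ∧ t % 2 = c % 2) :
    #W ≤ 2 * ((m - c) / 2 + 1).toNat := by
  set I := Icc 0 ((m - c) / 2)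
  have hsub : W ⊆ I.image (fun s => c + 2 * s) ∪ I.image (fun s => -(c + 2 * s)) := by
    intro t ht
    obtain ⟨hc, hm, hpar⟩ := hW t ht
    simp only [I, mem_union, mem_image, mem_Icc]
    rcases abs_choice t with habs | habs
    · exact .inl ⟨(t - c) / 2, by omega⟩
    · exact .inr ⟨(-t - c) / 2, by omega⟩
  calc #W ≤ #(I.image (fun s => c + 2 * s)) + #(I.image (fun s => -(c + 2 * s))) :=
        (card_le_card hsub).trans (card_union_le _ _)
    _ ≤ #I + #I := add_le_add card_image_le card_image_le
    _ = 2 * ((m - c) / 2 + 1).toNat := by rw [Int.card_Icc]; omega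

section ParityClass

variable {n : ℕ} {U V : Finset ℤ}

lemma exists_abs_threshold (r : ℤ) (hV : V ⊆ Icc (-(2 * n : ℤ)) (2 * n))
    (hUV : ∀ u ∈ U, ∀ v ∈ V, u % 2 = v % 2 → 2 * n < |u| + |v|) :
    ∃ b : ℤ, 0 ≤ b ∧ b ≤ 2 * n + 2 ∧ b % 2 = r % 2 ∧
      (∀ v ∈ V, v % 2 = r % 2 → b ≤ |v|) ∧ (∀ u ∈ U, u % 2 = r % 2 → 2 * n + 2 - b ≤ |u|) := by
  by_cases hne : (V.filter (· % 2 = r % 2)).Nonempty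
  · obtain ⟨v₀, hv₀, hmin⟩ := exists_min_image _ (fun v : ℤ => |v|) hne
    rw [mem_filter] at hv₀
    have hv₀m := mem_Icc.1 (hV hv₀.1)
    refine ⟨|v₀|, abs_nonneg _, by rcases abs_cases v₀ with h | h <;> omega,
      by rcases abs_cases v₀ with h | h <;> omega,
      fun v hv hvr => hmin v (mem_filter.2 ⟨hv, hvr⟩), fun u hu hur => ?_⟩
    have := hUV u hu v₀ hv₀.1 (by omega)
    -- `2 * n + 1 - |v₀| ≤ |u|` improves by one since `|u| ≡ |v₀| (mod 2)`
    rcases abs_cases u with h | h <;> rcases abs_cases v₀ with h' | h' <;> omega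
  · refine ⟨2 * n + 2 - r % 2, by omega, by omega, by omega,
      fun v hv hvr => absurd ⟨v, mem_filter.2 ⟨hv, hvr⟩⟩ hne, fun u _ hur => ?_⟩
    rcases abs_cases u with h | h <;> omega

lemma exists_card_parity_class_le (r : ℤ)
    (hU : U ⊆ Icc (-(2 * n : ℤ)) (2 * n)) (hV : V ⊆ Icc (-(2 * n : ℤ)) (2 * n))
    (hUV : ∀ u ∈ U, ∀ v ∈ V, u % 2 = v % 2 → 2 * n < |u| + |v|) :
    ∃ b : ℤ, 0 ≤ b ∧ b ≤ 2 * n + 2 ∧ b % 2 = r % 2 ∧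
      #(U.filter (· % 2 = r % 2)) ≤ 2 * ((b - 2) / 2 + 1).toNat ∧
      #(V.filter (· % 2 = r % 2)) ≤ 2 * ((2 * n - b) / 2 + 1).toNat := by
  obtain ⟨b, hb0, hb, hbr, hVb, hUb⟩ := exists_abs_threshold r hV hUV
  refine ⟨b, hb0, hb, hbr, ?_, ?_⟩
  · convert card_le_of_forall_abs_mem_Icc_of_emod_two_eq _ (2 * n + 2 - b) (2 * n) ?_ using 3
    · omega
    intro u hu
    rw [mem_filter] at hu
    have := mem_Icc.1 (hU hu.1)
    have := hUb u hu.1 hu.2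
    rcases abs_cases u with h | h <;> omega
  · refine card_le_of_forall_abs_mem_Icc_of_emod_two_eq _ b (2 * n) fun v hv => ?_
    rw [mem_filter] at hv
    have := mem_Icc.1 (hV hv.1)
    have := hVb v hv.1 hv.2
    rcases abs_cases v with h | h <;> omega

theorem exists_emod_two_eq_abs_add_le
    (hU : U ⊆ Icc (-(2 * n : ℤ)) (2 * n)) (hV : V ⊆ Icc (-(2 * n : ℤ)) (2 * n))
    (hUcard : 2 * n + 1 ≤ #U) (hVcard : 2 * n + 1 ≤ #V) :
    ∃ u ∈ U, ∃ v ∈ V, u % 2 = v % 2 ∧ |u| + |v| ≤ 2 * n := by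
  by_contra! hUV
  obtain ⟨b₀, hb₀_nonneg, hb₀_le, hb₀r, hU₀, hV₀⟩ := exists_card_parity_class_le 0 hU hV hUV
  obtain ⟨b₁, hb₁_nonneg, hb₁_le, hb₁r, hU₁, hV₁⟩ := exists_card_parity_class_le 1 hU hV hUV
  have hUsplit := card_filter_add_card_filter_not (s := U) (· % 2 = (0 : ℤ) % 2)
  have hVsplit := card_filter_add_card_filter_not (s := V) (· % 2 = (0 : ℤ) % 2)
  have hodd : ∀ t : ℤ, ¬t % 2 = 0 % 2 ↔ t % 2 = 1 % 2 := by omega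
  simp only [hodd] at hUsplit hVsplit
  omega

end ParityClass

lemma le_card_Icc_sdiff_image {n p : ℕ} (hp : p ≤ 2 * n) (f : Fin p → ℤ) :
    2 * n + 1 ≤ #(Icc (-(2 * n : ℤ)) (2 * n) \ univ.image f) := by
  have himage : #(univ.image f) ≤ p := card_image_le.trans_eq (card_fin p)
  have := le_card_sdiff (univ.image f) (Icc (-(2 * n : ℤ)) (2 * n))
  rw [Int.card_Icc] at this
  omega

lemma exists_cell_of_emod_two_eq_of_abs_add_le (n : ℕ) {u v : ℤ} (hpar : u % 2 = v % 2)
    (huv : |u| + |v| ≤ 2 * n) :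
    ∃ x y : ℕ, x < 2 * n + 1 ∧ y < 2 * n + 1 ∧ (x : ℤ) + y = u + 2 * n ∧ (x : ℤ) - y = v := by
  refine ⟨((u + v) / 2 + n).toNat, ((u - v) / 2 + n).toNat, ?_⟩
  rcases abs_cases u with h | h <;> rcases abs_cases v with h' | h' <;> omega

/-- For `k ≥ 1` it is impossible to cover the `(2k-1) × (2k-1)` board using
at most `2k-2` sum diagonals and at most `2k-2` difference diagonals. -/
theorem bishops_odd_square_lower_bound (k : ℕ) (hk : 1 ≤ k) (p : ℕ) (hp : p ≤ 2 * k - 2)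
    (S D : Fin p → ℤ) :
    ¬ (∀ x y : ℕ, x < 2 * k - 1 → y < 2 * k - 1 →
        ∃ i : Fin p, (x : ℤ) + y = S i ∨ (x : ℤ) - y = D i) := by
  intro hcover
  obtain ⟨n, rfl⟩ : ∃ n, k = n + 1 := ⟨k - 1, by omega⟩
  have hp' : p ≤ 2 * n := by omega
  obtain ⟨u, hu, v, hv, hpar, huv⟩ := exists_emod_two_eq_abs_add_le
    sdiff_subset sdiff_subset (le_card_Icc_sdiff_image hp' (S · - 2 * n))
    (le_card_Icc_sdiff_image hp' D)
  obtain ⟨x, y, hx, hy, hsum, hdiff⟩ := exists_cell_of_emod_two_eq_of_abs_add_le n hpar huv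
  obtain ⟨i, hi | hi⟩ := hcover x y (by omega) (by omega)
  · exact (mem_sdiff.1 hu).2 (mem_image.2 ⟨i, mem_univ _, by omega⟩)
  · exact (mem_sdiff.1 hv).2 (mem_image.2 ⟨i, mem_univ _, by omega⟩)
end

section
/- For all natural numbers n: α(B_{n×n}) = 2k−1 if n = 2k is even, and α(B_{n×n}) = 2k+1 if n = 2k+1 is odd. -/
/-!
In the coordinates `s = x + y`, `d = x - y` of the `n × n` board, the sum diagonal `s` and the
difference diagonal `d` meet on the board iff `s ≡ d (mod 2)` and
`|d| ≤ min s (2n - 2 - s)`; in particular they meet whenever `|d| = min s (2n - 2 - s)`.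
For a cover by `p` sum and `p` difference diagonals, at least `2n - 1 - p` sums and as many
differences are unused, and the maps `s ↦ min s (2n - 2 - s)` and `d ↦ |d|`, both at most
two-to-one, send them to disjoint subsets of `{0, …, n - 1}`. Hence `2 ⌈(2n - 1 - p) / 2⌉ ≤ n`,
that is `p ≥ n - 1`, and `p ≥ n` for odd `n`. Odd sums with even differences (`n` even), or even
sums with odd differences (`n` odd), give covers of that size.
-/

/-- `alphaB m n` is the least `p` such that `p` sum diagonals and `p` difference
diagonals cover the `m × n` board. -/
noncomputable def alphaB (m n : ℕ) : ℕ :=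
  sInf {p : ℕ | ∃ S D : Fin p → ℤ,
    ∀ x y : ℕ, x < m → y < n → ∃ i : Fin p, (x : ℤ) + y = S i ∨ (x : ℤ) - y = D i}

open Finset

namespace Finset

theorem card_le_two_mul_card_image {α β : Type*} [DecidableEq β] (s : Finset α) (f : α → β)
    (g : α → α) (hf : ∀ a ∈ s, ∀ b ∈ s, f a = f b → b = a ∨ b = g a) :
    #s ≤ 2 * #(s.image f) := by
  classical
  refine card_le_mul_card_image s 2 fun y hy => ?_
  obtain ⟨a, ha, rfl⟩ := mem_image.mp hy
  calc #{b ∈ s | f b = f a} ≤ #{a, g a} := card_le_card fun b hb => by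
        obtain ⟨hb, hab⟩ := mem_filter.mp hb
        rcases hf a ha b hb hab.symm with rfl | rfl <;> simp
    _ ≤ 2 := card_le_two

theorem sub_card_le_card_sdiff_image {α : Type*} [DecidableEq α] {p : ℕ} (t : Finset α)
    (f : Fin p → α) : #t - p ≤ #(t \ univ.image f) :=
  calc #t - p ≤ #t - #(univ.image f) := by
        gcongr; exact card_image_le.trans (card_fin p).le
    _ ≤ #(t \ univ.image f) := le_card_sdiff _ _

end Finset

def DiagonalCover (n p : ℕ) (S D : Fin p → ℤ) : Prop :=
  ∀ x y : ℕ, x < n → y < n → ∃ i : Fin p, (x : ℤ) + y = S i ∨ (x : ℤ) - y = D i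

theorem diagonalCover_alternating (n : ℕ) :
    DiagonalCover n (n - 1 + n % 2) (fun i => 2 * i + ((n + 1) % 2 : ℕ))
      (fun i => 2 * i + 2 - n) := by
  intro x y hx hy
  have := Nat.mod_two_eq_zero_or_one n
  by_cases h : (x + y + n) % 2 = 1
  · exact ⟨⟨(x + y) / 2, by omega⟩, Or.inl (by push_cast; omega)⟩
  · exact ⟨⟨(x + n - 2 - y) / 2, by omega⟩, Or.inr (by push_cast; omega)⟩

namespace DiagonalCover

variable {n p : ℕ} {S D : Fin p → ℤ}

theorem sum_mem_or_diff_mem (h : DiagonalCover n p S D) {s d : ℤ} (hpar : s % 2 = d % 2)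
    (hlo : d.natAbs ≤ s) (hhi : d.natAbs + s ≤ 2 * ((n : ℤ) - 1)) :
    s ∈ univ.image S ∨ d ∈ univ.image D := by
  obtain ⟨x, hx⟩ : ∃ x : ℕ, (x : ℤ) = (s + d) / 2 := ⟨_, Int.toNat_of_nonneg (by omega)⟩
  obtain ⟨y, hy⟩ : ∃ y : ℕ, (y : ℤ) = (s - d) / 2 := ⟨_, Int.toNat_of_nonneg (by omega)⟩
  obtain ⟨i, hi | hi⟩ := h x y (by omega) (by omega)
  · exact Or.inl (mem_image.mpr ⟨i, mem_univ i, by omega⟩)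
  · exact Or.inr (mem_image.mpr ⟨i, mem_univ i, by omega⟩)

theorem sub_one_add_mod_two_le (h : DiagonalCover n p S D) : n - 1 + n % 2 ≤ p := by
  set m : ℤ := n - 1
  set unusedSums := Icc 0 (2 * m) \ univ.image S
  set unusedDiffs := Icc (-m) m \ univ.image D
  set sumDepths := unusedSums.image fun s => (min s (2 * m - s)).toNat
  set diffDepths := unusedDiffs.image Int.natAbs
  have hS : 2 * n - 1 - p ≤ 2 * #sumDepths := by
    refine le_trans ?_ (card_le_two_mul_card_image _ _ (fun s => 2 * m - s) fun s hs t ht hst => ?_)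
    · have : #(Icc 0 (2 * m)) - p ≤ #unusedSums := sub_card_le_card_sdiff_image _ _
      rw [Int.card_Icc] at this
      omega
    · simp only [unusedSums, mem_sdiff, mem_Icc] at hs ht
      omega
  have hD : 2 * n - 1 - p ≤ 2 * #diffDepths := by
    refine le_trans ?_ (card_le_two_mul_card_image _ _ Neg.neg fun d _ e _ hde => by omega)
    have : #(Icc (-m) m) - p ≤ #unusedDiffs := sub_card_le_card_sdiff_image _ _
    rw [Int.card_Icc] at this
    omega
  have hdisj : Disjoint sumDepths diffDepths := by
    refine disjoint_left.mpr fun t htS htD => ?_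
    obtain ⟨s, hs, rfl⟩ := mem_image.mp htS
    obtain ⟨d, hd, hsd⟩ := mem_image.mp htD
    simp only [unusedSums, unusedDiffs, mem_sdiff, mem_Icc] at hs hd
    rcases h.sum_mem_or_diff_mem (s := s) (d := d) (by omega) (by omega) (by omega) with h' | h'
    exacts [hs.2 h', hd.2 h']
  have hsub : sumDepths ∪ diffDepths ⊆ range n := by
    intro t ht
    simp only [sumDepths, diffDepths, unusedSums, unusedDiffs, mem_union, mem_image, mem_sdiff,
      mem_Icc, mem_range] at ht ⊢
    omega
  have := card_le_card hsub
  rw [card_union_of_disjoint hdisj, card_range] at this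
  omega

end DiagonalCover

theorem alphaB_self (n : ℕ) : alphaB n n = n - 1 + n % 2 :=
  le_antisymm (Nat.sInf_le ⟨_, _, diagonalCover_alternating n⟩)
    (le_csInf ⟨_, _, _, diagonalCover_alternating n⟩ fun _ ⟨_, _, h⟩ =>
      DiagonalCover.sub_one_add_mod_two_le h)

/-- `α(B_{n×n}) = 2k-1` if `n = 2k` and `α(B_{n×n}) = 2k+1` if `n = 2k+1`. -/
theorem alphaB_square (k : ℕ) :
    alphaB (2 * k) (2 * k) = 2 * k - 1 ∧ alphaB (2 * k + 1) (2 * k + 1) = 2 * k + 1 := by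
  simp only [alphaB_self]
  omega
end

section
/- For all natural numbers n: β(Q_{n×n}) = 2k if n = 4k, and β(Q_{n×n}) = 2k+1 if n ∈ {4k+1, 4k+2, 4k+3}. -/
/-!
The columns and rows avoided by `p` lines leave sets `A`, `B` of at least `n - p` integers with
`x + y ∈ S` or `x - y ∈ D` for all `x ∈ A`, `y ∈ B`. On the frame of `A × B` formed by its extreme
rows and columns, every sum diagonal and every difference diagonal meets at most two cells. If
`|A| = |B| = m > |S|, |D|`, all the resulting counts are tight, and comparing the two extreme rows
(or columns, whichever pair lies farther apart) forces `m` to be even. Taking `m = p + 1` and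
`m = p + 2` gives `n ≤ 2p + 1`, and `p` odd when `n = 2p + 1`. Conversely, the odd rows and
columns together with the diagonals `x + y ≡ 2` and `x - y ≡ 0 (mod 4)` achieve these bounds.
-/

open Finset

/-- `betaQ m n` is the least `p` such that `p` rows, `p` columns, `p` sum
diagonals and `p` difference diagonals cover the `m × n` board. -/
noncomputable def betaQ (m n : ℕ) : ℕ :=
  sInf {p : ℕ | ∃ R C : Fin p → ℕ, ∃ S D : Fin p → ℤ,
    ∀ x y : ℕ, x < m → y < n →
      ∃ i : Fin p, y = R i ∨ x = C i ∨ (x : ℤ) + y = S i ∨ (x : ℤ) - y = D i}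

theorem card_filter_add_card_filter_le_of_separated {α β γ : Type*} [LinearOrder γ]
    {A : Finset α} {B : Finset β} {T : Finset γ} {f : α → γ} {g : β → γ} {c : γ}
    (hf : Set.InjOn f A) (hg : Set.InjOn g B)
    (hfc : ∀ x ∈ A, c ≤ f x) (hgc : ∀ y ∈ B, g y ≤ c) :
    #{x ∈ A | f x ∈ T} + #{y ∈ B | g y ∈ T} ≤ #T + 1 := by
  set U := {x ∈ A | f x ∈ T}.image f
  set V := {y ∈ B | g y ∈ T}.image g
  have hU : #U = #{x ∈ A | f x ∈ T} := card_image_of_injOn (hf.mono (filter_subset _ _))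
  have hV : #V = #{y ∈ B | g y ∈ T} := card_image_of_injOn (hg.mono (filter_subset _ _))
  have hUV : U ∩ V ⊆ {c} := by
    intro z hz
    simp only [U, V, mem_inter, mem_image, mem_filter] at hz
    obtain ⟨⟨x, ⟨hx, -⟩, rfl⟩, ⟨y, ⟨hy, -⟩, hyx⟩⟩ := hz
    exact mem_singleton.2 (le_antisymm (hyx ▸ hgc y hy) (hfc x hx))
  have hUVT : U ∪ V ⊆ T := by
    refine union_subset ?_ ?_ <;> simp +contextual [U, V, image_subset_iff]
  calc #{x ∈ A | f x ∈ T} + #{y ∈ B | g y ∈ T} = #(U ∪ V) + #(U ∩ V) := by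
        rw [card_union_add_card_inter, hU, hV]
    _ ≤ #T + 1 := add_le_add (card_le_card hUVT) ((card_le_card hUV).trans_eq (card_singleton c))

theorem card_le_card_filter_add_card_filter {α : Type*} {s : Finset α} {p q : α → Prop}
    [DecidablePred p] [DecidablePred q] (h : ∀ x ∈ s, p x ∨ q x) :
    #s ≤ #{x ∈ s | p x} + #{x ∈ s | q x} := by
  have hnot : {x ∈ s | ¬p x} ⊆ {x ∈ s | q x} := fun x hx => by
    simp only [mem_filter] at hx ⊢
    exact ⟨hx.1, (h x hx.1).resolve_left hx.2⟩
  rw [← card_filter_add_card_filter_not p]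
  exact Nat.add_le_add_left (card_le_card hnot) _

section Frame

variable {A B S D : Finset ℤ} {a₀ a₁ b₀ b₁ : ℤ}

theorem card_filter_add_mem_eq_of_isLeast_of_isGreatest
    (ha₀ : IsLeast (A : Set ℤ) a₀) (ha₁ : IsGreatest (A : Set ℤ) a₁)
    (hb₀ : IsLeast (B : Set ℤ) b₀) (hb₁ : IsGreatest (B : Set ℤ) b₁)
    (hAB : #A = #B) (hS : #S < #A) (hD : #D < #A)
    (hcov : ∀ x ∈ A, ∀ y ∈ B, x + y ∈ S ∨ x - y ∈ D) :
    #{x ∈ A | x + b₀ ∈ S} = #{x ∈ A | x + b₁ ∈ S} ∧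
      #{y ∈ B | a₀ + y ∈ S} = #{y ∈ B | a₁ + y ∈ S} := by
  have row₀ := card_le_card_filter_add_card_filter fun x hx => hcov x hx b₀ hb₀.1
  have row₁ := card_le_card_filter_add_card_filter fun x hx => hcov x hx b₁ hb₁.1
  have col₀ := card_le_card_filter_add_card_filter (hcov a₀ ha₀.1)
  have col₁ := card_le_card_filter_add_card_filter (hcov a₁ ha₁.1)
  have nw : #{x ∈ A | x + b₁ ∈ S} + #{y ∈ B | a₀ + y ∈ S} ≤ #S + 1 :=
    card_filter_add_card_filter_le_of_separated (c := a₀ + b₁)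
      (add_left_injective b₁).injOn (add_right_injective a₀).injOn
      (fun x hx => by linarith [ha₀.2 hx]) (fun y hy => by linarith [hb₁.2 hy])
  have se : #{y ∈ B | a₁ + y ∈ S} + #{x ∈ A | x + b₀ ∈ S} ≤ #S + 1 :=
    card_filter_add_card_filter_le_of_separated (c := a₁ + b₀)
      (add_right_injective a₁).injOn (add_left_injective b₀).injOn
      (fun y hy => by linarith [hb₀.2 hy]) (fun x hx => by linarith [ha₁.2 hx])
  have ne : #{y ∈ B | a₁ - y ∈ D} + #{x ∈ A | x - b₁ ∈ D} ≤ #D + 1 :=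
    card_filter_add_card_filter_le_of_separated (c := a₁ - b₁)
      (sub_right_injective (b := a₁)).injOn (sub_left_injective (b := b₁)).injOn
      (fun y hy => by linarith [hb₁.2 hy]) (fun x hx => by linarith [ha₁.2 hx])
  have sw : #{x ∈ A | x - b₀ ∈ D} + #{y ∈ B | a₀ - y ∈ D} ≤ #D + 1 :=
    card_filter_add_card_filter_le_of_separated (c := a₀ - b₀)
      (sub_left_injective (b := b₀)).injOn (sub_right_injective (b := a₀)).injOn
      (fun x hx => by linarith [ha₀.2 hx]) (fun y hy => by linarith [hb₀.2 hy])
  omega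

theorem even_card_of_forall_add_mem_or_sub_mem (hAB : #A = #B) (hS : #S < #A) (hD : #D < #A)
    (hcov : ∀ x ∈ A, ∀ y ∈ B, x + y ∈ S ∨ x - y ∈ D) : Even #A := by
  have hA : A.Nonempty := card_pos.1 (by omega)
  have hB : B.Nonempty := card_pos.1 (by omega)
  obtain ⟨a₀, ha₀⟩ : ∃ a, IsLeast (A : Set ℤ) a := ⟨_, A.isLeast_min' hA⟩
  obtain ⟨a₁, ha₁⟩ : ∃ a, IsGreatest (A : Set ℤ) a := ⟨_, A.isGreatest_max' hA⟩
  obtain ⟨b₀, hb₀⟩ : ∃ b, IsLeast (B : Set ℤ) b := ⟨_, B.isLeast_min' hB⟩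
  obtain ⟨b₁, hb₁⟩ : ∃ b, IsGreatest (B : Set ℤ) b := ⟨_, B.isGreatest_max' hB⟩
  obtain ⟨hrows, hcols⟩ :=
    card_filter_add_mem_eq_of_isLeast_of_isGreatest ha₀ ha₁ hb₀ hb₁ hAB hS hD hcov
  -- If the extreme rows are at least as far apart as the extreme columns, the sums (differences)
  -- along one of them all lie on one side of those along the other.
  rcases le_total (a₁ - a₀) (b₁ - b₀) with hW | hW
  · have row₀ := card_le_card_filter_add_card_filter fun x hx => hcov x hx _ hb₀.1
    have row₁ := card_le_card_filter_add_card_filter fun x hx => hcov x hx _ hb₁.1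
    have rowsS : #{x ∈ A | x + b₁ ∈ S} + #{x ∈ A | x + b₀ ∈ S} ≤ #S + 1 :=
      card_filter_add_card_filter_le_of_separated (c := a₀ + b₁)
        (add_left_injective _).injOn (add_left_injective _).injOn
        (fun x hx => by linarith [ha₀.2 hx]) (fun x hx => by linarith [ha₁.2 hx])
    have rowsD : #{x ∈ A | x - b₀ ∈ D} + #{x ∈ A | x - b₁ ∈ D} ≤ #D + 1 :=
      card_filter_add_card_filter_le_of_separated (c := a₀ - b₀)
        sub_left_injective.injOn sub_left_injective.injOn
        (fun x hx => by linarith [ha₀.2 hx]) (fun x hx => by linarith [ha₁.2 hx])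
    exact ⟨#{x ∈ A | x + b₀ ∈ S}, by omega⟩
  · have col₀ := card_le_card_filter_add_card_filter (hcov _ ha₀.1)
    have col₁ := card_le_card_filter_add_card_filter (hcov _ ha₁.1)
    have colsS : #{y ∈ B | a₁ + y ∈ S} + #{y ∈ B | a₀ + y ∈ S} ≤ #S + 1 :=
      card_filter_add_card_filter_le_of_separated (c := a₁ + b₀)
        (add_right_injective _).injOn (add_right_injective _).injOn
        (fun y hy => by linarith [hb₀.2 hy]) (fun y hy => by linarith [hb₁.2 hy])
    have colsD : #{y ∈ B | a₁ - y ∈ D} + #{y ∈ B | a₀ - y ∈ D} ≤ #D + 1 :=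
      card_filter_add_card_filter_le_of_separated (c := a₁ - b₁)
        sub_right_injective.injOn sub_right_injective.injOn
        (fun y hy => by linarith [hb₁.2 hy]) (fun y hy => by linarith [hb₀.2 hy])
    exact ⟨#{y ∈ B | a₀ + y ∈ S}, by omega⟩

end Frame

def HasLineCover (m n p : ℕ) : Prop :=
  ∃ R C : Fin p → ℕ, ∃ S D : Fin p → ℤ, ∀ x y : ℕ, x < m → y < n →
    ∃ i : Fin p, y = R i ∨ x = C i ∨ (x : ℤ) + y = S i ∨ (x : ℤ) - y = D i

theorem betaQ_eq_of_forall_hasLineCover_iff {m n p₀ : ℕ}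
    (h : ∀ p, HasLineCover m n p ↔ p₀ ≤ p) : betaQ m n = p₀ := by
  have hset : {p | HasLineCover m n p} = Set.Ici p₀ := Set.ext h
  exact (congrArg sInf hset).trans csInf_Ici

theorem HasLineCover.exists_uncovered {m n p : ℕ} (h : HasLineCover m n p) :
    ∃ A B S D : Finset ℤ, m ≤ #A + p ∧ n ≤ #B + p ∧ #S ≤ p ∧ #D ≤ p ∧
      ∀ x ∈ A, ∀ y ∈ B, x + y ∈ S ∨ x - y ∈ D := by
  obtain ⟨R, C, S, D, h⟩ := h
  have card_range_sdiff (k : ℕ) (L : Fin p → ℕ) :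
      k ≤ #((range k).image ((↑) : ℕ → ℤ) \ univ.image fun i => (L i : ℤ)) + p := by
    have h₁ := le_card_sdiff (univ.image fun i => (L i : ℤ)) ((range k).image ((↑) : ℕ → ℤ))
    have h₂ : #(univ.image fun i => (L i : ℤ)) ≤ p := card_image_le.trans_eq (card_fin p)
    rw [card_image_of_injective _ Nat.cast_injective, card_range] at h₁
    omega
  refine ⟨(range m).image (↑) \ univ.image fun i => (C i : ℤ),
    (range n).image (↑) \ univ.image fun i => (R i : ℤ), univ.image S, univ.image D,
    card_range_sdiff m C, card_range_sdiff n R, card_image_le.trans_eq (card_fin p),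
    card_image_le.trans_eq (card_fin p), ?_⟩
  simp only [mem_sdiff, mem_image, mem_range, mem_univ, true_and, not_exists]
  rintro _ ⟨⟨x, hx, rfl⟩, hxC⟩ _ ⟨⟨y, hy, rfl⟩, hyR⟩
  obtain ⟨i, hi | hi | hi | hi⟩ := h x y hx hy
  · exact absurd (congrArg Nat.cast hi.symm) (hyR i)
  · exact absurd (congrArg Nat.cast hi.symm) (hxC i)
  · exact .inl ⟨i, hi.symm⟩
  · exact .inr ⟨i, hi.symm⟩

theorem HasLineCover.even {n p m : ℕ} (h : HasLineCover n n p) (hpm : p < m) (hmn : m + p ≤ n) :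
    Even m := by
  obtain ⟨A, B, S, D, hA, hB, hS, hD, hcov⟩ := h.exists_uncovered
  obtain ⟨A', hA'A, hA'⟩ := exists_subset_card_eq (show m ≤ #A by omega)
  obtain ⟨B', hB'B, hB'⟩ := exists_subset_card_eq (show m ≤ #B by omega)
  rw [← hA']
  exact even_card_of_forall_add_mem_or_sub_mem (by omega) (by omega) (by omega)
    fun x hx y hy => hcov x (hA'A hx) y (hB'B hy)

theorem hasLineCover_self_of_le {n p : ℕ} (hn : n ≤ 2 * p + 1) (hodd : n = 2 * p + 1 → Odd p) :
    HasLineCover n n p := by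
  simp only [Nat.odd_iff] at hodd
  refine ⟨fun i => 2 * i + 1, fun i => 2 * i + 1, fun i => 4 * i + 2,
    fun i => 4 * i - 4 * (p / 2 : ℕ), fun x y hx hy => ?_⟩
  by_cases hy2 : y % 2 = 1
  · exact ⟨⟨y / 2, by omega⟩, .inl (by dsimp only; omega)⟩
  by_cases hx2 : x % 2 = 1
  · exact ⟨⟨x / 2, by omega⟩, .inr (.inl (by dsimp only; omega))⟩
  by_cases hs : (x + y) % 4 = 2
  · exact ⟨⟨(x + y) / 4, by omega⟩, .inr (.inr (.inl (by dsimp only; push_cast; omega)))⟩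
  · exact ⟨⟨(x + 4 * (p / 2) - y) / 4, by omega⟩, .inr (.inr (.inr (by dsimp only; omega)))⟩

theorem hasLineCover_self_iff {n p : ℕ} :
    HasLineCover n n p ↔ n ≤ 2 * p + 1 ∧ (n = 2 * p + 1 → Odd p) := by
  refine ⟨fun h => ⟨?_, fun hn => ?_⟩, fun h => hasLineCover_self_of_le h.1 h.2⟩
  · by_contra! hn
    exact Nat.even_add_one.1 (h.even (m := p + 2) (by omega) (by omega))
      (h.even (m := p + 1) (by omega) (by omega))
  · exact Nat.not_even_iff_odd.1 (Nat.even_add_one.1 (h.even (m := p + 1) (by omega) (by omega)))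

/-- `β(Q_{n×n})` equals `2k` for `n = 4k` and `2k+1` for `n ∈ {4k+1, 4k+2, 4k+3}`. -/
theorem betaQ_square (k : ℕ) :
    betaQ (4 * k) (4 * k) = 2 * k ∧
    betaQ (4 * k + 1) (4 * k + 1) = 2 * k + 1 ∧
    betaQ (4 * k + 2) (4 * k + 2) = 2 * k + 1 ∧
    betaQ (4 * k + 3) (4 * k + 3) = 2 * k + 1 := by
  refine ⟨?_, ?_, ?_, ?_⟩ <;>
    refine betaQ_eq_of_forall_hasLineCover_iff fun p => ?_ <;>
    rw [hasLineCover_self_iff, Nat.odd_iff] <;> omega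
end

section
/- For all natural numbers m ≥ n ≥ 1 with m ≥ 3n−2: if p rows, p columns, p sum diagonals and p difference diagonals cover the m × n board, then p ≥ n. -/
/-!
If `p < n`, some row `y₀ < n` is missed by all `p` chosen rows, so each of the `m` cells of row
`y₀` lies on a chosen column, sum diagonal or difference diagonal. Each such line meets the row in
at most one cell, hence `m ≤ 3p ≤ 3n - 3 < m`.
-/

open Finset

/-- `c`, `s - y`, `d + y` are where column `c`, sum diagonal `s` and difference diagonal `d` cross
row `y`; `toNat` is harmless since `x` itself is a natural number. -/
lemma mem_row_traces_of_on_line {x y c : ℕ} {s d : ℤ}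
    (h : x = c ∨ (x : ℤ) + y = s ∨ (x : ℤ) - y = d) :
    x ∈ ({c, (s - y).toNat, (d + y).toNat} : Finset ℕ) := by
  simp only [mem_insert, mem_singleton]
  omega

lemma le_three_mul_of_covers_row {m y p : ℕ} (C : Fin p → ℕ) (S D : Fin p → ℤ)
    (hcover : ∀ x < m, ∃ i : Fin p, x = C i ∨ (x : ℤ) + y = S i ∨ (x : ℤ) - y = D i) :
    m ≤ 3 * p := by
  have hsub : range m ⊆ univ.biUnion fun i => {C i, (S i - y).toNat, (D i + y).toNat} := by
    intro x hx
    obtain ⟨i, hi⟩ := hcover x (mem_range.mp hx)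
    exact mem_biUnion.mpr ⟨i, mem_univ i, mem_row_traces_of_on_line hi⟩
  calc m = #(range m) := (card_range m).symm
    _ ≤ ∑ _i : Fin p, 3 := (card_le_card hsub).trans (card_biUnion_le.trans
        (sum_le_sum fun _ _ => card_le_three))
    _ = 3 * p := by simp [mul_comm]

lemma exists_lt_forall_ne_of_lt {p n : ℕ} (R : Fin p → ℕ) (hp : p < n) :
    ∃ y < n, ∀ i, y ≠ R i := by
  classical
  have hcard : #(univ.image R) < #(range n) := by
    simpa using card_image_le.trans_lt (by simpa using hp)
  obtain ⟨y, hy, hyR⟩ := exists_mem_notMem_of_card_lt_card hcard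
  exact ⟨y, mem_range.mp hy, fun i hi => hyR (mem_image.mpr ⟨i, mem_univ i, hi.symm⟩)⟩

theorem relaxed_queens_rect_trivial_case_general (m n p : ℕ)
    (htriv : 3 * n - 2 ≤ m)
    (R C : Fin p → ℕ) (S D : Fin p → ℤ)
    (hcover : ∀ x y : ℕ, x < m → y < n →
      ∃ i : Fin p, y = R i ∨ x = C i ∨ (x : ℤ) + y = S i ∨ (x : ℤ) - y = D i) :
    p ≥ n := by
  by_contra! hp
  obtain ⟨y₀, hy₀, hy₀R⟩ := exists_lt_forall_ne_of_lt R hp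
  have hrow : m ≤ 3 * p := le_three_mul_of_covers_row (y := y₀) C S D fun x hx => by
    obtain ⟨i, hi⟩ := hcover x y₀ hx hy₀
    exact ⟨i, hi.resolve_left (hy₀R i)⟩
  omega

/-- For `m ≥ n ≥ 1` with `m ≥ 3n - 2`: if `p` rows, `p` columns, `p` sum diagonals
and `p` difference diagonals cover the `m × n` board, then `p ≥ n`. -/
theorem relaxed_queens_rect_trivial_case (m n p : ℕ) (hmn : n ≤ m) (hn : 1 ≤ n)
    (htriv : 3 * n - 2 ≤ m)
    (R C : Fin p → ℕ) (S D : Fin p → ℤ)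
    (hcover : ∀ x y : ℕ, x < m → y < n →
      ∃ i : Fin p, y = R i ∨ x = C i ∨ (x : ℤ) + y = S i ∨ (x : ℤ) - y = D i) :
    p ≥ n :=
  relaxed_queens_rect_trivial_case_general m n p htriv R C S D hcover
end

section
/- For all natural numbers m ≥ n ≥ 2 with m < 3n−2: if p rows, p columns, p sum diagonals and p difference diagonals cover the m × n board, then 4p ≥ m + n − 2. -/
/-!
Induct on a box `[x₀, x₁] × [y₀, y₁]` covered by a set `L` of lines. If one of the four sides of
the box is a line of `L`, cut it off: the line meets the box but not the smaller box, so the number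
of lines of `L` meeting the box drops by one. Otherwise every border cell is covered by a line that
is not a side, and such a line meets the border in at most two cells; as the border has
`2 (x₁ - x₀) + 2 (y₁ - y₀)` cells, at least `x₁ - x₀ + y₁ - y₀` lines meet the box. Cutting can only
end without this bound when every row or every column of the box belongs to `L`, which on the
`m × n` board costs `n` rows or `m` columns, and `n ≤ m < 3n - 2` makes either enough.
-/

open Finset

namespace RelaxedQueens

inductive Line
  | row (y : ℤ)
  | col (x : ℤ)
  | sum (s : ℤ)
  | diff (d : ℤ)
  deriving DecidableEq

namespace Line

def Contains : Line → ℤ × ℤ → Prop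
  | row y, c => c.2 = y
  | col x, c => c.1 = x
  | sum s, c => c.1 + c.2 = s
  | diff d, c => c.1 - c.2 = d

instance (ℓ : Line) (c : ℤ × ℤ) : Decidable (ℓ.Contains c) := by
  cases ℓ <;> unfold Contains <;> infer_instance

end Line

noncomputable def box (x₀ x₁ y₀ y₁ : ℤ) : Finset (ℤ × ℤ) := Icc x₀ x₁ ×ˢ Icc y₀ y₁

noncomputable def border (x₀ x₁ y₀ y₁ : ℤ) : Finset (ℤ × ℤ) :=
  box x₀ x₁ y₀ y₁ \ box (x₀ + 1) (x₁ - 1) (y₀ + 1) (y₁ - 1)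

def meeting (L : Finset Line) (B : Finset (ℤ × ℤ)) : Finset Line :=
  L.filter fun ℓ => ∃ c ∈ B, ℓ.Contains c

def Covers (L : Finset Line) (B : Finset (ℤ × ℤ)) : Prop :=
  ∀ c ∈ B, ∃ ℓ ∈ L, ℓ.Contains c

theorem Covers.mono {L : Finset Line} {B B' : Finset (ℤ × ℤ)} (h : Covers L B) (hB : B' ⊆ B) :
    Covers L B' :=
  fun c hc => h c (hB hc)

section Box

variable {x₀ x₁ y₀ y₁ : ℤ}

@[simp]
theorem mem_box {c : ℤ × ℤ} : c ∈ box x₀ x₁ y₀ y₁ ↔ x₀ ≤ c.1 ∧ c.1 ≤ x₁ ∧ y₀ ≤ c.2 ∧ c.2 ≤ y₁ := by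
  simp [box, and_assoc]

theorem box_subset_box {x₀' x₁' y₀' y₁' : ℤ} (hx₀ : x₀ ≤ x₀') (hx₁ : x₁' ≤ x₁) (hy₀ : y₀ ≤ y₀')
    (hy₁ : y₁' ≤ y₁) : box x₀' x₁' y₀' y₁' ⊆ box x₀ x₁ y₀ y₁ :=
  fun c hc => by rw [mem_box] at hc ⊢; omega

theorem card_box : #(box x₀ x₁ y₀ y₁) = (x₁ + 1 - x₀).toNat * (y₁ + 1 - y₀).toNat := by
  rw [box, card_product, Int.card_Icc, Int.card_Icc]

theorem card_border (hx : x₀ < x₁) (hy : y₀ < y₁) :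
    (#(border x₀ x₁ y₀ y₁) : ℤ) = 2 * (x₁ - x₀) + 2 * (y₁ - y₀) := by
  rw [border, card_sdiff_of_subset (box_subset_box (by omega) (by omega) (by omega) (by omega)),
    Nat.cast_sub (card_le_card (box_subset_box (by omega) (by omega) (by omega) (by omega))),
    card_box, card_box]
  push_cast [Int.toNat_of_nonneg (a := x₁ + 1 - x₀) (by omega),
    Int.toNat_of_nonneg (a := y₁ + 1 - y₀) (by omega),
    Int.toNat_of_nonneg (a := x₁ - 1 + 1 - (x₀ + 1)) (by omega),
    Int.toNat_of_nonneg (a := y₁ - 1 + 1 - (y₀ + 1)) (by omega)]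
  ring

theorem card_filter_box_col_le_one {x : ℤ} {ℓ : Line} (hℓ : ℓ ≠ .col x) :
    #((box x x y₀ y₁).filter ℓ.Contains) ≤ 1 := by
  refine card_le_one.2 fun c hc c' hc' => ?_
  simp only [mem_filter, mem_box] at hc hc'
  cases ℓ <;> simp only [Line.Contains, ne_eq, Line.col.injEq] at hc hc' hℓ <;>
    exact Prod.ext (by omega) (by omega)

theorem card_filter_box_row_le_one {y : ℤ} {ℓ : Line} (hℓ : ℓ ≠ .row y) :
    #((box x₀ x₁ y y).filter ℓ.Contains) ≤ 1 := by
  refine card_le_one.2 fun c hc c' hc' => ?_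
  simp only [mem_filter, mem_box] at hc hc'
  cases ℓ <;> simp only [Line.Contains, ne_eq, Line.row.injEq] at hc hc' hℓ <;>
    exact Prod.ext (by omega) (by omega)

theorem card_filter_border_le_two {ℓ : Line} (hb : ℓ ≠ .row y₀) (ht : ℓ ≠ .row y₁)
    (hl : ℓ ≠ .col x₀) (hr : ℓ ≠ .col x₁) : #((border x₀ x₁ y₀ y₁).filter ℓ.Contains) ≤ 2 := by
  suffices ∃ a b, (border x₀ x₁ y₀ y₁).filter ℓ.Contains ⊆ {a, b} from
    this.elim fun _ ⟨_, h⟩ => (card_le_card h).trans card_le_two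
  -- a border cell on a diagonal is one of the two ends of the diagonal's segment in the box
  rcases ℓ with y | x | s | d <;> [
    refine ⟨(x₀, y), (x₁, y), ?_⟩;
    refine ⟨(x, y₀), (x, y₁), ?_⟩;
    refine ⟨(max x₀ (s - y₁), s - max x₀ (s - y₁)), (min x₁ (s - y₀), s - min x₁ (s - y₀)), ?_⟩;
    refine ⟨(max x₀ (d + y₀), max x₀ (d + y₀) - d), (min x₁ (d + y₁), min x₁ (d + y₁) - d), ?_⟩] <;>
  · intro c hc
    simp only [border, mem_filter, mem_sdiff, mem_box, Line.Contains, mem_insert, mem_singleton,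
      Prod.ext_iff, ne_eq, Line.row.injEq, Line.col.injEq] at hc hb ht hl hr ⊢
    omega

end Box

section Meeting

variable {L : Finset Line} {B B' : Finset (ℤ × ℤ)}

theorem card_meeting_lt {ℓ : Line} (hB : B' ⊆ B) (hℓ : ℓ ∈ meeting L B) (hℓ' : ℓ ∉ meeting L B') :
    #(meeting L B') < #(meeting L B) := by
  refine card_lt_card ⟨fun ℓ' h => ?_, fun h => hℓ' (h hℓ)⟩
  simp only [meeting, mem_filter] at h ⊢
  obtain ⟨hℓ'L, c, hc, hℓ'c⟩ := h
  exact ⟨hℓ'L, c, hB hc, hℓ'c⟩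

theorem card_le_mul_card_meeting {A : Finset (ℤ × ℤ)} {k : ℕ} (hAB : A ⊆ B) (hcov : Covers L A)
    (hk : ∀ ℓ ∈ L, #(A.filter ℓ.Contains) ≤ k) : #A ≤ k * #(meeting L B) := by
  have := card_mul_le_card_mul (fun c (ℓ : Line) => ℓ.Contains c) (s := A) (t := meeting L B)
    (m := 1) (n := k) (fun c hc => ?_) (fun ℓ hℓ => hk ℓ (mem_filter.1 hℓ).1)
  · simpa [mul_comm] using this
  obtain ⟨ℓ, hℓ, hℓc⟩ := hcov c hc
  exact one_le_card.2 ⟨ℓ, mem_filter.2 ⟨mem_filter.2 ⟨hℓ, c, hAB hc, hℓc⟩, hℓc⟩⟩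

variable {x₀ x₁ y₀ y₁ : ℤ}

theorem row_mem_meeting_box {y : ℤ} :
    .row y ∈ meeting L (box x₀ x₁ y₀ y₁) ↔ .row y ∈ L ∧ x₀ ≤ x₁ ∧ y₀ ≤ y ∧ y ≤ y₁ := by
  rw [meeting, mem_filter]
  simp only [mem_box, Line.Contains, Prod.exists]
  constructor
  · rintro ⟨h, x, y', hc, rfl⟩; exact ⟨h, by omega⟩
  · rintro ⟨h, hc⟩; exact ⟨h, x₀, y, by omega, rfl⟩

theorem col_mem_meeting_box {x : ℤ} :
    .col x ∈ meeting L (box x₀ x₁ y₀ y₁) ↔ .col x ∈ L ∧ x₀ ≤ x ∧ x ≤ x₁ ∧ y₀ ≤ y₁ := by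
  rw [meeting, mem_filter]
  simp only [mem_box, Line.Contains, Prod.exists]
  constructor
  · rintro ⟨h, x', y, hc, rfl⟩; exact ⟨h, by omega⟩
  · rintro ⟨h, hc⟩; exact ⟨h, x, y₀, by omega, rfl⟩

theorem le_card_meeting_of_sides_not_mem (hx : x₀ ≤ x₁) (hy : y₀ ≤ y₁)
    (hcov : Covers L (box x₀ x₁ y₀ y₁)) (hb : .row y₀ ∉ L) (ht : .row y₁ ∉ L)
    (hl : .col x₀ ∉ L) (hr : .col x₁ ∉ L) :
    x₁ - x₀ + (y₁ - y₀) ≤ #(meeting L (box x₀ x₁ y₀ y₁)) := by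
  rcases hx.eq_or_lt with rfl | hx
  · have := card_le_mul_card_meeting subset_rfl hcov fun ℓ hℓ =>
      card_filter_box_col_le_one (ne_of_mem_of_not_mem hℓ hl)
    rw [card_box, add_sub_cancel_left, Int.toNat_one] at this
    omega
  rcases hy.eq_or_lt with rfl | hy
  · have := card_le_mul_card_meeting subset_rfl hcov fun ℓ hℓ =>
      card_filter_box_row_le_one (ne_of_mem_of_not_mem hℓ hb)
    rw [card_box, add_sub_cancel_left, Int.toNat_one] at this
    omega
  have := card_le_mul_card_meeting (A := border x₀ x₁ y₀ y₁) sdiff_subset (hcov.mono sdiff_subset)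
    fun ℓ hℓ => card_filter_border_le_two (ne_of_mem_of_not_mem hℓ hb) (ne_of_mem_of_not_mem hℓ ht)
      (ne_of_mem_of_not_mem hℓ hl) (ne_of_mem_of_not_mem hℓ hr)
  have := card_border hx hy
  omega

theorem le_card_meeting_or_rows_or_cols (L : Finset Line) (x₀ x₁ y₀ y₁ : ℤ)
    (hcov : Covers L (box x₀ x₁ y₀ y₁)) :
    x₁ - x₀ + (y₁ - y₀) ≤ #(meeting L (box x₀ x₁ y₀ y₁)) ∨
      (∀ y ∈ Icc y₀ y₁, .row y ∈ L) ∨ (∀ x ∈ Icc x₀ x₁, .col x ∈ L) := by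
  by_cases hx : x₁ < x₀
  · exact .inr <| .inr fun x hx' => by rw [mem_Icc] at hx'; omega
  by_cases hy : y₁ < y₀
  · exact .inr <| .inl fun y hy' => by rw [mem_Icc] at hy'; omega
  by_cases hb : .row y₀ ∈ L
  · have hB : box x₀ x₁ (y₀ + 1) y₁ ⊆ box x₀ x₁ y₀ y₁ :=
      box_subset_box le_rfl le_rfl (by omega) le_rfl
    have := card_meeting_lt hB (row_mem_meeting_box.2 ⟨hb, by omega⟩)
      (by rw [row_mem_meeting_box]; omega)
    refine (le_card_meeting_or_rows_or_cols L _ _ _ _ (hcov.mono hB)).imp (fun _ => by omega)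
      (.imp (fun h y hy => ?_) id)
    exact (eq_or_ne y y₀).elim (· ▸ hb) fun _ => h y (by rw [mem_Icc] at hy ⊢; omega)
  by_cases ht : .row y₁ ∈ L
  · have hB : box x₀ x₁ y₀ (y₁ - 1) ⊆ box x₀ x₁ y₀ y₁ :=
      box_subset_box le_rfl le_rfl le_rfl (by omega)
    have := card_meeting_lt hB (row_mem_meeting_box.2 ⟨ht, by omega⟩)
      (by rw [row_mem_meeting_box]; omega)
    refine (le_card_meeting_or_rows_or_cols L _ _ _ _ (hcov.mono hB)).imp (fun _ => by omega)
      (.imp (fun h y hy => ?_) id)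
    exact (eq_or_ne y y₁).elim (· ▸ ht) fun _ => h y (by rw [mem_Icc] at hy ⊢; omega)
  by_cases hl : .col x₀ ∈ L
  · have hB : box (x₀ + 1) x₁ y₀ y₁ ⊆ box x₀ x₁ y₀ y₁ :=
      box_subset_box (by omega) le_rfl le_rfl le_rfl
    have := card_meeting_lt hB (col_mem_meeting_box.2 ⟨hl, by omega⟩)
      (by rw [col_mem_meeting_box]; omega)
    refine (le_card_meeting_or_rows_or_cols L _ _ _ _ (hcov.mono hB)).imp (fun _ => by omega)
      (.imp id (fun h x hx => ?_))
    exact (eq_or_ne x x₀).elim (· ▸ hl) fun _ => h x (by rw [mem_Icc] at hx ⊢; omega)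
  by_cases hr : .col x₁ ∈ L
  · have hB : box x₀ (x₁ - 1) y₀ y₁ ⊆ box x₀ x₁ y₀ y₁ :=
      box_subset_box le_rfl (by omega) le_rfl le_rfl
    have := card_meeting_lt hB (col_mem_meeting_box.2 ⟨hr, by omega⟩)
      (by rw [col_mem_meeting_box]; omega)
    refine (le_card_meeting_or_rows_or_cols L _ _ _ _ (hcov.mono hB)).imp (fun _ => by omega)
      (.imp id (fun h x hx => ?_))
    exact (eq_or_ne x x₁).elim (· ▸ hr) fun _ => h x (by rw [mem_Icc] at hx ⊢; omega)
  exact .inl <| le_card_meeting_of_sides_not_mem (by omega) (by omega) hcov hb ht hl hr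
termination_by (x₁ + 1 - x₀ + (y₁ + 1 - y₀)).toNat
decreasing_by all_goals omega

end Meeting

def lines {ι : Type*} [Fintype ι] (R C S D : ι → ℤ) : Finset Line :=
  univ.biUnion fun i => {.row (R i), .col (C i), .sum (S i), .diff (D i)}

section Lines

variable {ι : Type*} [Fintype ι] {R C S D : ι → ℤ}

theorem card_lines_le : #(lines R C S D) ≤ 4 * Fintype.card ι :=
  card_biUnion_le.trans <| (sum_le_card_nsmul _ _ 4 fun _ _ => card_le_four).trans_eq <| by
    rw [card_univ, smul_eq_mul, mul_comm]

theorem row_mem_lines {y : ℤ} : .row y ∈ lines R C S D ↔ ∃ i, R i = y := by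
  simp [lines, eq_comm]

theorem col_mem_lines {x : ℤ} : .col x ∈ lines R C S D ↔ ∃ i, C i = x := by
  simp [lines, eq_comm]

theorem exists_mem_lines_contains {c : ℤ × ℤ} :
    (∃ ℓ ∈ lines R C S D, ℓ.Contains c) ↔
      ∃ i, c.2 = R i ∨ c.1 = C i ∨ c.1 + c.2 = S i ∨ c.1 - c.2 = D i := by
  simp only [lines, mem_biUnion, mem_univ, true_and, mem_insert, mem_singleton]
  constructor
  · rintro ⟨ℓ, ⟨i, rfl | rfl | rfl | rfl⟩, h⟩ <;> exact ⟨i, by simp_all [Line.Contains]⟩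
  · rintro ⟨i, h | h | h | h⟩
    exacts [⟨_, ⟨i, .inl rfl⟩, h⟩, ⟨_, ⟨i, .inr (.inl rfl)⟩, h⟩,
      ⟨_, ⟨i, .inr (.inr (.inl rfl))⟩, h⟩, ⟨_, ⟨i, .inr (.inr (.inr rfl))⟩, h⟩]

end Lines

theorem toNat_le_card_of_Icc_subset_range {ι : Type*} [Fintype ι] {f : ι → ℤ} {a b : ℤ}
    (h : ∀ y ∈ Icc a b, ∃ i, f i = y) : (b + 1 - a).toNat ≤ Fintype.card ι := by
  rw [← Int.card_Icc]
  refine (card_le_card fun y hy => ?_).trans (card_image_le (s := univ) (f := f))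
  obtain ⟨i, rfl⟩ := h y hy
  exact mem_image_of_mem f (mem_univ i)

end RelaxedQueens

open RelaxedQueens

theorem relaxed_queens_rect_lower_bound_general (m n p : ℕ) (hmn : n ≤ m)
    (hnontriv : m < 3 * n - 2)
    (R C : Fin p → ℕ) (S D : Fin p → ℤ)
    (hcover : ∀ x y : ℕ, x < m → y < n →
      ∃ i : Fin p, y = R i ∨ x = C i ∨ (x : ℤ) + y = S i ∨ (x : ℤ) - y = D i) :
    4 * p ≥ m + n - 2 := by
  set L := lines (R ·) (C ·) S D
  have hcov : Covers L (box 0 (m - 1) 0 (n - 1)) := fun c hc => by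
    rw [mem_box] at hc
    obtain ⟨i, hi⟩ := hcover c.1.toNat c.2.toNat (by omega) (by omega)
    exact exists_mem_lines_contains.2 ⟨i, by omega⟩
  have hL : #L ≤ 4 * p := card_lines_le.trans_eq (by rw [Fintype.card_fin])
  rcases le_card_meeting_or_rows_or_cols L _ _ _ _ hcov with h | h | h
  · have : #(meeting L (box 0 (m - 1) 0 (n - 1))) ≤ #L := card_le_card (filter_subset _ _)
    omega
  · have := toNat_le_card_of_Icc_subset_range fun y hy => row_mem_lines.1 (h y hy)
    simp only [sub_add_cancel, sub_zero, Int.toNat_natCast, Fintype.card_fin] at this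
    omega
  · have := toNat_le_card_of_Icc_subset_range fun x hx => col_mem_lines.1 (h x hx)
    simp only [sub_add_cancel, sub_zero, Int.toNat_natCast, Fintype.card_fin] at this
    omega

/-- For `m ≥ n ≥ 2` with `m < 3n - 2`: if `p` rows, `p` columns, `p` sum diagonals
and `p` difference diagonals cover the `m × n` board, then `4p ≥ m + n - 2`. -/
theorem relaxed_queens_rect_lower_bound (m n p : ℕ) (hmn : n ≤ m) (hn : 2 ≤ n)
    (hnontriv : m < 3 * n - 2)
    (R C : Fin p → ℕ) (S D : Fin p → ℤ)
    (hcover : ∀ x y : ℕ, x < m → y < n →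
      ∃ i : Fin p, y = R i ∨ x = C i ∨ (x : ℤ) + y = S i ∨ (x : ℤ) - y = D i) :
    4 * p ≥ m + n - 2 :=
  relaxed_queens_rect_lower_bound_general m n p hmn hnontriv R C S D hcover
end

section
/- Let m' and n' both be odd natural numbers with m', n' ≥ 1, let C'_0 < ... < C'_{m'-1} and R'_0 < ... < R'_{n'-1} be column and row indices, and let G be the spaced grid {(C'_i, R'_j)}. If p sum diagonals and p difference diagonals cover G, then p ≥ (m' + n' − 2)/2 + 1. -/
/-!
The product of the `2p` linear forms `x + y - S t` and `x - y - D t` vanishes on the grid. Its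
top homogeneous part is `(x + y)^p (x - y)^p = (x² - y²)^p`, whose coefficient of
`x^(2k) y^(2(p-k))` is `±(p choose k) ≠ 0`. With `2a + 1` columns, `2b + 1` rows and `p ≤ a + b`,
the choice `k = min a p` puts this monomial strictly inside the grid's degree box, contradicting
Alon's Combinatorial Nullstellensatz.
-/

open Finset

namespace MvPolynomial

section CommSemiring

variable {σ R : Type*} [CommSemiring R]

theorem homogeneousComponent_mul_of_totalDegree_le {φ ψ : MvPolynomial σ R} {m n : ℕ}
    (hφ : φ.totalDegree ≤ m) (hψ : ψ.totalDegree ≤ n) :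
    homogeneousComponent (m + n) (φ * ψ) =
      homogeneousComponent m φ * homogeneousComponent n ψ := by
  classical
  ext d
  rw [coeff_homogeneousComponent]
  split_ifs with hd
  · rw [coeff_mul, coeff_mul]
    refine sum_congr rfl fun e he => ?_
    rw [HasAntidiagonal.mem_antidiagonal] at he
    have hdeg : e.1.degree + e.2.degree = m + n := by rw [← map_add, he, hd]
    rw [coeff_homogeneousComponent, coeff_homogeneousComponent]
    rcases lt_trichotomy e.1.degree m with h | h | h
    · rw [coeff_eq_zero_of_totalDegree_lt (d := e.2) (hψ.trans_lt (by omega : n < e.2.degree))]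
      simp
    · rw [if_pos h, if_pos (by omega)]
    · rw [coeff_eq_zero_of_totalDegree_lt (d := e.1) (hφ.trans_lt (by omega : m < e.1.degree))]
      simp
  · exact ((homogeneousComponent_isHomogeneous m φ).mul
      (homogeneousComponent_isHomogeneous n ψ)).coeff_eq_zero hd |>.symm

end CommSemiring

section CommRing

variable {σ R : Type*} [CommRing R]

theorem totalDegree_prod_sub_C_le {L : MvPolynomial σ R} (hL : L.IsHomogeneous 1) {ι : Type*}
    (s : Finset ι) (c : ι → R) : (∏ i ∈ s, (L - C (c i))).totalDegree ≤ #s := by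
  refine (totalDegree_finsetProd s _).trans ?_
  rw [card_eq_sum_ones]
  exact sum_le_sum fun i _ => (totalDegree_sub_C_le L (c i)).trans hL.totalDegree_le

theorem homogeneousComponent_prod_sub_C {L : MvPolynomial σ R} (hL : L.IsHomogeneous 1)
    {ι : Type*} [DecidableEq ι] (s : Finset ι) (c : ι → R) :
    homogeneousComponent #s (∏ i ∈ s, (L - C (c i))) = L ^ #s := by
  induction s using Finset.induction_on with
  | empty => simp
  | insert a s ha ih =>
    have hlin : homogeneousComponent 1 (L - C (c a)) = L := by
      rw [map_sub, homogeneousComponent_eq_self hL, homogeneousComponent_of_mem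
        (isHomogeneous_C σ (c a)), if_neg one_ne_zero, sub_zero]
    rw [prod_insert ha, card_insert_of_notMem ha, add_comm,
      homogeneousComponent_mul_of_totalDegree_le
        ((totalDegree_sub_C_le L (c a)).trans hL.totalDegree_le) (totalDegree_prod_sub_C_le hL s c),
      hlin, ih, pow_add, pow_one]

theorem coeff_X_sq_sub_X_sq_pow [DecidableEq σ] {i j : σ} (hij : i ≠ j) {k p : ℕ} (hk : k ≤ p) :
    coeff (Finsupp.single i (2 * k) + Finsupp.single j (2 * (p - k)))
      ((X i ^ 2 - X j ^ 2) ^ p : MvPolynomial σ R) = (-1 : R) ^ (p - k) * p.choose k := by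
  have hterm : ∀ l, (X i ^ 2) ^ l * (-X j ^ 2) ^ (p - l) * (p.choose l : MvPolynomial σ R) =
      monomial (Finsupp.single i (2 * l) + Finsupp.single j (2 * (p - l)))
        ((-1 : R) ^ (p - l) * p.choose l) := by
    intro l
    rw [← monomial_mul, neg_pow, ← pow_mul, ← pow_mul, ← C_mul_X_pow_eq_monomial,
      ← C_mul_X_pow_eq_monomial]
    simp only [map_pow, map_neg, map_one, map_natCast]
    ring
  rw [sub_eq_add_neg, add_pow, coeff_sum]
  simp_rw [hterm, coeff_monomial]
  rw [sum_eq_single_of_mem k (mem_range.mpr (Nat.lt_succ_of_le hk)) ?_, if_pos rfl]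
  intro l _ hlk
  rw [if_neg]
  intro h
  have := congrArg (· i) h
  simp [hij] at this
  omega

end CommRing

end MvPolynomial

open MvPolynomial

section Diagonals

variable {R : Type*} [CommRing R] {p : ℕ}

noncomputable def diagonalsPoly (S D : Fin p → R) : MvPolynomial (Fin 2) R :=
  (∏ t, (X 0 + X 1 - C (S t))) * ∏ t, (X 0 - X 1 - C (D t))

variable (S D : Fin p → R)

theorem eval_diagonalsPoly (x : Fin 2 → R) :
    eval x (diagonalsPoly S D) = (∏ t, (x 0 + x 1 - S t)) * ∏ t, (x 0 - x 1 - D t) := by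
  simp [diagonalsPoly]

theorem totalDegree_diagonalsPoly_le : (diagonalsPoly S D).totalDegree ≤ p + p := by
  have hS := totalDegree_prod_sub_C_le ((isHomogeneous_X R (0 : Fin 2)).add (isHomogeneous_X R 1))
    univ S
  have hD := totalDegree_prod_sub_C_le ((isHomogeneous_X R (0 : Fin 2)).sub (isHomogeneous_X R 1))
    univ D
  rw [card_fin] at hS hD
  exact (totalDegree_mul _ _).trans (add_le_add hS hD)

theorem coeff_diagonalsPoly {d : Fin 2 →₀ ℕ} (hd : d.degree = p + p) :
    coeff d (diagonalsPoly S D) = coeff d ((X 0 ^ 2 - X 1 ^ 2) ^ p) := by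
  have hsum : (X 0 + X 1 : MvPolynomial (Fin 2) R).IsHomogeneous 1 :=
    (isHomogeneous_X R 0).add (isHomogeneous_X R 1)
  have hdiff : (X 0 - X 1 : MvPolynomial (Fin 2) R).IsHomogeneous 1 :=
    (isHomogeneous_X R 0).sub (isHomogeneous_X R 1)
  have hS := homogeneousComponent_prod_sub_C hsum univ S
  have hD := homogeneousComponent_prod_sub_C hdiff univ D
  have hS' := totalDegree_prod_sub_C_le hsum univ S
  have hD' := totalDegree_prod_sub_C_le hdiff univ D
  rw [card_fin] at hS hD hS' hD'
  have htop : homogeneousComponent (p + p) (diagonalsPoly S D) = (X 0 ^ 2 - X 1 ^ 2) ^ p := by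
    rw [diagonalsPoly, homogeneousComponent_mul_of_totalDegree_le hS' hD', hS, hD, ← mul_pow]
    ring
  rw [← htop, coeff_homogeneousComponent, if_pos hd]

theorem exists_mem_grid_not_mem_diagonals [IsDomain R] [CharZero R] (A B : Finset R) {k : ℕ}
    (hk : k ≤ p) (hA : 2 * k < #A) (hB : 2 * (p - k) < #B) :
    ∃ x ∈ A, ∃ y ∈ B, ∀ t, x + y ≠ S t ∧ x - y ≠ D t := by
  set d := Finsupp.single (0 : Fin 2) (2 * k) + Finsupp.single 1 (2 * (p - k))
  have hdeg : d.degree = p + p := by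
    rw [map_add, Finsupp.degree_single, Finsupp.degree_single]
    omega
  have hcoeff : coeff d (diagonalsPoly S D) ≠ 0 := by
    rw [coeff_diagonalsPoly S D hdeg, coeff_X_sq_sub_X_sq_pow Fin.zero_ne_one hk]
    exact mul_ne_zero (pow_ne_zero _ (neg_ne_zero.mpr one_ne_zero))
      (Nat.cast_ne_zero.mpr (Nat.choose_pos hk).ne')
  have htot : (diagonalsPoly S D).totalDegree = d.degree :=
    le_antisymm (hdeg ▸ totalDegree_diagonalsPoly_le S D)
      (le_totalDegree (mem_support_iff.mpr hcoeff))
  obtain ⟨x, hx, hne⟩ := combinatorial_nullstellensatz_exists_eval_nonzero _ d hcoeff htot ![A, B]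
    (by intro i; fin_cases i <;> simp [d] <;> omega)
  rw [eval_diagonalsPoly] at hne
  refine ⟨x 0, hx 0, x 1, hx 1, fun t => ⟨fun h => hne ?_, fun h => hne ?_⟩⟩
  · exact mul_eq_zero_of_left (prod_eq_zero (mem_univ t) (by rw [h, sub_self])) _
  · exact mul_eq_zero_of_right _ (prod_eq_zero (mem_univ t) (by rw [h, sub_self]))

end Diagonals

/-- If `m'` and `n'` are odd and `p` sum diagonals and `p` difference diagonals
cover the spaced grid with strictly increasing columns `C'` (of size `m'`) and
rows `R'` (of size `n'`), then `p ≥ (m' + n' - 2)/2 + 1`. -/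
theorem spaced_odd_grid_lower_bound (m' n' p : ℕ) (hm : Odd m') (hn : Odd n')
    (C' : Fin m' → ℤ) (R' : Fin n' → ℤ) (hC : StrictMono C') (hR : StrictMono R')
    (S D : Fin p → ℤ)
    (hcover : ∀ (i : Fin m') (j : Fin n'),
      ∃ t : Fin p, C' i + R' j = S t ∨ C' i - R' j = D t) :
    p ≥ (m' + n' - 2) / 2 + 1 := by
  obtain ⟨a, rfl⟩ := hm
  obtain ⟨b, rfl⟩ := hn
  by_contra! hp
  have hcols : #(univ.image C') = 2 * a + 1 := by
    rw [card_image_of_injective _ hC.injective, card_fin]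
  have hrows : #(univ.image R') = 2 * b + 1 := by
    rw [card_image_of_injective _ hR.injective, card_fin]
  obtain ⟨x, hx, y, hy, hxy⟩ := exists_mem_grid_not_mem_diagonals S D (univ.image C')
    (univ.image R') (min_le_right a p) (by omega) (by omega)
  obtain ⟨i, -, rfl⟩ := mem_image.mp hx
  obtain ⟨j, -, rfl⟩ := mem_image.mp hy
  obtain ⟨t, ht | ht⟩ := hcover i j
  exacts [(hxy t).1 ht, (hxy t).2 ht]
end

section
/- For all natural numbers m, n with m, n both even and m + n ≡ 6 (mod 8), and with max{m,n} < 3·min{m,n} − 2: if p rows, p columns, p sum diagonals and p difference diagonals cover the m × n board, then p ≥ (m+n−2)/4 + 1. -/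
/-!
Suppose `p ≤ k := (m + n - 2) / 4`, so `k` is odd and `m + n = 4k + 2`. The columns `X` and rows
`Y` missed by the rook lines number at least `m - p` and `n - p`, and every cell of `X × Y` lies on
one of the `2p` diagonals. The boundary cells of `X × Y` (its two extreme columns and two extreme
rows) number `2|X| + 2|Y| - 4 ≥ 4p`, and a diagonal meets them at most twice, so each diagonal
meets them exactly twice, `p = k` and `|X| = m - k` is odd.

Let `A` and `B` be the side lengths of the bounding box of `X × Y`, and read its boundary as a
cycle of length `2(A + B)`. A sum diagonal pairs boundary positions `t` and `-t`, a difference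
diagonal pairs `t` and `2A - t`. Summing the positions of all boundary cells in two ways gives
`(|X| - 2)(A + B) ≡ 0 [ZMOD 2(A + B)]`, so `|X|` is even.
-/

open Finset

namespace QueenCover

theorem exists_mem_lt_subset_Icc {α : Type*} [LinearOrder α] {s : Finset α} (hs : 2 ≤ #s) :
    ∃ a ∈ s, ∃ b ∈ s, a < b ∧ (s : Set α) ⊆ Set.Icc a b :=
  have hne : s.Nonempty := card_pos.1 (by omega)
  ⟨s.min' hne, min'_mem s hne, s.max' hne, max'_mem s hne, min'_lt_max'_of_card s hs,
    fun x hx => ⟨min'_le s x hx, le_max' s x hx⟩⟩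

theorem card_le_two_of_iff_imp_eq {α : Type*} {s : Finset α} (P : α → Prop) [DecidablePred P]
    (h : ∀ a ∈ s, ∀ b ∈ s, (P a ↔ P b) → a = b) : #s ≤ 2 := by
  refine (card_le_card_of_injOn (fun a => decide (P a)) (t := univ)
    (fun _ _ => mem_coe.2 (mem_univ _)) ?_).trans_eq (card_univ.trans Fintype.card_bool)
  exact fun a ha b hb hab => h a ha b hb (decide_eq_decide.1 hab)

section Fibers

variable {α ι : Type*} [Fintype ι] [DecidableEq ι] {s : Finset α} {f : α → ι}

theorem card_filter_eq_two_of_le_two (hle : ∀ i, #(s.filter (f · = i)) ≤ 2)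
    (hs : 2 * Fintype.card ι ≤ #s) (i : ι) : #(s.filter (f · = i)) = 2 := by
  have hsum : #s = ∑ j, #(s.filter (f · = j)) :=
    card_eq_sum_card_fiberwise fun a _ => mem_coe.2 (mem_univ (f a))
  have hall : ∑ j, #(s.filter (f · = j)) = ∑ _j : ι, 2 := by
    refine le_antisymm (sum_le_sum fun j _ => hle j) ?_
    rw [sum_const, card_univ, smul_eq_mul]
    omega
  exact (sum_eq_sum_iff_of_le fun j _ => hle j).1 hall i (mem_univ i)

theorem sum_modEq_of_card_filter_eq_two {g : α → ℤ} {v : ι → ℤ} {n : ℤ}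
    (hfib : ∀ i, #(s.filter (f · = i)) = 2)
    (hpair : ∀ a ∈ s, ∀ b ∈ s, a ≠ b → f a = f b → g a + g b ≡ v (f a) [ZMOD n]) :
    ∑ a ∈ s, g a ≡ ∑ i, v i [ZMOD n] := by
  classical
  rw [← sum_fiberwise s f g]
  refine Int.ModEq.sum fun i _ => ?_
  obtain ⟨a, b, hab, hfib_eq⟩ := card_eq_two.1 (hfib i)
  have ha : a ∈ s.filter (f · = i) := hfib_eq ▸ mem_insert_self a {b}
  have hb : b ∈ s.filter (f · = i) := hfib_eq ▸ mem_insert_of_mem (mem_singleton_self b)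
  rw [mem_filter] at ha hb
  rw [hfib_eq, sum_pair hab, ← ha.2]
  exact hpair a ha.1 b hb.1 hab (ha.2.trans hb.2.symm)

end Fibers

theorem even_of_sub_modEq {a b q : ℕ} {A B : ℤ} (hAB : A + B ≠ 0) (hab : a + b = 2 * q)
    (h : b * A - a * B ≡ q * (2 * A) [ZMOD 2 * (A + B)]) : Even a := by
  have hdvd := h.dvd
  have hab' : (a : ℤ) + b = 2 * q := by exact_mod_cast hab
  rw [show (q : ℤ) * (2 * A) - (b * A - a * B) = a * (A + B) by
    linear_combination -A * hab'] at hdvd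
  exact even_iff_two_dvd.2 (Int.natCast_dvd_natCast.1 ((mul_dvd_mul_iff_right hAB).1 hdvd))

def OnDiag : ℤ ⊕ ℤ → ℤ × ℤ → Prop
  | .inl s, c => c.1 + c.2 = s
  | .inr d, c => c.1 - c.2 = d

instance (ℓ : ℤ ⊕ ℤ) : DecidablePred (OnDiag ℓ) := fun c =>
  match ℓ with
  | .inl s => inferInstanceAs (Decidable (c.1 + c.2 = s))
  | .inr d => inferInstanceAs (Decidable (c.1 - c.2 = d))

def InBoxBoundary (x₀ x₁ y₀ y₁ : ℤ) (c : ℤ × ℤ) : Prop :=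
  x₀ ≤ c.1 ∧ c.1 ≤ x₁ ∧ y₀ ≤ c.2 ∧ c.2 ≤ y₁ ∧ (c.1 = x₀ ∨ c.1 = x₁ ∨ c.2 = y₀ ∨ c.2 = y₁)

/-- Modulo `2 * ((x₁ - x₀) + (y₁ - y₀))`, the position of a cell on the boundary cycle of the box
`[x₀, x₁] × [y₀, y₁]`, counted counterclockwise from `(x₀, y₀)`. -/
def perimeterCoord (x₀ x₁ y₀ : ℤ) (c : ℤ × ℤ) : ℤ :=
  if c.2 = y₀ ∨ c.1 = x₁ then c.1 + c.2 - x₀ - y₀ else -(c.1 + c.2 - x₀ - y₀)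

def diagShift (x₀ x₁ : ℤ) : ℤ ⊕ ℤ → ℤ :=
  Sum.elim (fun _ => 0) (fun _ => 2 * (x₁ - x₀))

section BoxBoundary

variable {x₀ x₁ y₀ y₁ : ℤ} {c c' : ℤ × ℤ}

/- The boundary splits into two monotone lattice paths from `(x₀, y₀)` to `(x₁, y₁)`, along each
of which `x + y` increases strictly; likewise `x - y` along the two paths from `(x₀, y₁)` to
`(x₁, y₀)`. -/
theorem InBoxBoundary.eq_of_add_eq (hc : InBoxBoundary x₀ x₁ y₀ y₁ c)
    (hc' : InBoxBoundary x₀ x₁ y₀ y₁ c') (hs : c.1 + c.2 = c'.1 + c'.2)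
    (hside : (c.2 = y₀ ∨ c.1 = x₁) ↔ (c'.2 = y₀ ∨ c'.1 = x₁)) : c = c' := by
  unfold InBoxBoundary at hc hc'
  ext <;> omega

theorem InBoxBoundary.eq_of_sub_eq (hc : InBoxBoundary x₀ x₁ y₀ y₁ c)
    (hc' : InBoxBoundary x₀ x₁ y₀ y₁ c') (hd : c.1 - c.2 = c'.1 - c'.2)
    (hside : (c.2 = y₀ ∨ c.1 = x₀) ↔ (c'.2 = y₀ ∨ c'.1 = x₀)) : c = c' := by
  unfold InBoxBoundary at hc hc'
  ext <;> omega

theorem card_filter_onDiag_le_two {F : Finset (ℤ × ℤ)}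
    (hF : ∀ c ∈ F, InBoxBoundary x₀ x₁ y₀ y₁ c) (ℓ : ℤ ⊕ ℤ) : #(F.filter (OnDiag ℓ)) ≤ 2 := by
  cases ℓ with
  | inl s =>
    refine card_le_two_of_iff_imp_eq (fun c => c.2 = y₀ ∨ c.1 = x₁) fun c hc c' hc' => ?_
    rw [mem_filter] at hc hc'
    exact (hF c hc.1).eq_of_add_eq (hF c' hc'.1) (hc.2.trans hc'.2.symm)
  | inr d =>
    refine card_le_two_of_iff_imp_eq (fun c => c.2 = y₀ ∨ c.1 = x₀) fun c hc c' hc' => ?_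
    rw [mem_filter] at hc hc'
    exact (hF c hc.1).eq_of_sub_eq (hF c' hc'.1) (hc.2.trans hc'.2.symm)

theorem perimeterCoord_add_of_add_eq (hc : InBoxBoundary x₀ x₁ y₀ y₁ c)
    (hc' : InBoxBoundary x₀ x₁ y₀ y₁ c') (hne : c ≠ c') (hs : c.1 + c.2 = c'.1 + c'.2) :
    perimeterCoord x₀ x₁ y₀ c + perimeterCoord x₀ x₁ y₀ c' = 0 := by
  have hside := mt (hc.eq_of_add_eq hc' hs) hne
  unfold perimeterCoord
  split_ifs <;> omega

theorem perimeterCoord_add_modEq_of_sub_eq (hc : InBoxBoundary x₀ x₁ y₀ y₁ c)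
    (hc' : InBoxBoundary x₀ x₁ y₀ y₁ c') (hne : c ≠ c') (hd : c.1 - c.2 = c'.1 - c'.2) :
    perimeterCoord x₀ x₁ y₀ c + perimeterCoord x₀ x₁ y₀ c' ≡ 2 * (x₁ - x₀)
      [ZMOD 2 * ((x₁ - x₀) + (y₁ - y₀))] := by
  have hside := mt (hc.eq_of_sub_eq hc' hd) hne
  have hval : perimeterCoord x₀ x₁ y₀ c + perimeterCoord x₀ x₁ y₀ c' = 2 * (x₁ - x₀) ∨
      perimeterCoord x₀ x₁ y₀ c + perimeterCoord x₀ x₁ y₀ c' =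
        2 * (x₁ - x₀) - 2 * ((x₁ - x₀) + (y₁ - y₀)) := by
    unfold InBoxBoundary at hc hc'
    unfold perimeterCoord
    split_ifs <;> omega
  rcases hval with h | h
  · rw [h]
  · exact Int.modEq_iff_dvd.mpr ⟨1, by rw [h]; ring⟩

theorem perimeterCoord_add_modEq_diagShift (hc : InBoxBoundary x₀ x₁ y₀ y₁ c)
    (hc' : InBoxBoundary x₀ x₁ y₀ y₁ c') (hne : c ≠ c') {ℓ : ℤ ⊕ ℤ} (hℓ : OnDiag ℓ c)
    (hℓ' : OnDiag ℓ c') :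
    perimeterCoord x₀ x₁ y₀ c + perimeterCoord x₀ x₁ y₀ c' ≡ diagShift x₀ x₁ ℓ
      [ZMOD 2 * ((x₁ - x₀) + (y₁ - y₀))] := by
  cases ℓ with
  | inl s =>
    rw [perimeterCoord_add_of_add_eq hc hc' hne (hℓ.trans hℓ'.symm)]
    rfl
  | inr d => exact perimeterCoord_add_modEq_of_sub_eq hc hc' hne (hℓ.trans hℓ'.symm)

end BoxBoundary

def frame (X Y : Finset ℤ) (x₀ x₁ y₀ y₁ : ℤ) : Finset (ℤ × ℤ) :=
  {x₀, x₁} ×ˢ Y ∪ (X \ {x₀, x₁}) ×ˢ {y₀, y₁}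

section Frame

variable {X Y : Finset ℤ} {x₀ x₁ y₀ y₁ : ℤ}

theorem frame_subset (hx₀ : x₀ ∈ X) (hx₁ : x₁ ∈ X) (hy₀ : y₀ ∈ Y) (hy₁ : y₁ ∈ Y) :
    frame X Y x₀ x₁ y₀ y₁ ⊆ X ×ˢ Y :=
  union_subset (product_subset_product (insert_subset hx₀ (singleton_subset_iff.2 hx₁)) le_rfl)
    (product_subset_product sdiff_subset (insert_subset hy₀ (singleton_subset_iff.2 hy₁)))

theorem inBoxBoundary_of_mem_frame (hX : (X : Set ℤ) ⊆ Set.Icc x₀ x₁)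
    (hY : (Y : Set ℤ) ⊆ Set.Icc y₀ y₁) (hx : x₀ ≤ x₁) (hy : y₀ ≤ y₁) {c : ℤ × ℤ}
    (hc : c ∈ frame X Y x₀ x₁ y₀ y₁) : InBoxBoundary x₀ x₁ y₀ y₁ c := by
  simp only [frame, mem_union, mem_product, mem_insert, mem_singleton, mem_sdiff] at hc
  unfold InBoxBoundary
  rcases hc with ⟨h1, h2⟩ | ⟨⟨h1, -⟩, h2⟩
  · obtain ⟨_, _⟩ := hY h2
    omega
  · obtain ⟨_, _⟩ := hX h1
    omega

theorem disjoint_frame_parts :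
    Disjoint ({x₀, x₁} ×ˢ Y) ((X \ {x₀, x₁}) ×ˢ ({y₀, y₁} : Finset ℤ)) :=
  disjoint_product.2 (Or.inl disjoint_sdiff)

theorem card_frame (hx : x₀ ≠ x₁) (hy : y₀ ≠ y₁) :
    #(frame X Y x₀ x₁ y₀ y₁) = 2 * #Y + 2 * #(X \ {x₀, x₁}) := by
  rw [frame, card_union_of_disjoint disjoint_frame_parts, card_product, card_product,
    card_pair hx, card_pair hy, mul_comm #(X \ _)]

theorem sum_perimeterCoord_frame (hx : x₀ ≠ x₁) (hy : y₀ ≠ y₁) :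
    ∑ c ∈ frame X Y x₀ x₁ y₀ y₁, perimeterCoord x₀ x₁ y₀ c =
      #Y * (x₁ - x₀) - #(X \ {x₀, x₁}) * (y₁ - y₀) := by
  have hcol : ∀ y,
      perimeterCoord x₀ x₁ y₀ (x₀, y) + perimeterCoord x₀ x₁ y₀ (x₁, y) = x₁ - x₀ := by
    intro y
    unfold perimeterCoord
    split_ifs <;> omega
  have hrow : ∀ x ∈ X \ {x₀, x₁},
      perimeterCoord x₀ x₁ y₀ (x, y₀) + perimeterCoord x₀ x₁ y₀ (x, y₁) = -(y₁ - y₀) := by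
    intro x hx'
    simp only [mem_sdiff, mem_insert, mem_singleton] at hx'
    unfold perimeterCoord
    split_ifs <;> omega
  rw [frame, sum_union disjoint_frame_parts, sum_product_right, sum_product]
  simp only [sum_pair hx, sum_pair hy, hcol]
  rw [sum_congr rfl hrow, sum_const, sum_const, nsmul_eq_mul, nsmul_eq_mul]
  ring

theorem card_add_card_eq_and_even_of_frame_cover {q : ℕ} (hq : 0 < q) (S D : Fin q → ℤ)
    (hX : (X : Set ℤ) ⊆ Set.Icc x₀ x₁) (hY : (Y : Set ℤ) ⊆ Set.Icc y₀ y₁) (hx : x₀ < x₁)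
    (hy : y₀ < y₁) (hcov : ∀ c ∈ frame X Y x₀ x₁ y₀ y₁, ∃ t, OnDiag (Sum.map S D t) c)
    (hcard : 4 * q ≤ #(frame X Y x₀ x₁ y₀ y₁)) :
    #(X \ {x₀, x₁}) + #Y = 2 * q ∧ Even #(X \ {x₀, x₁}) := by
  set F := frame X Y x₀ x₁ y₀ y₁
  have hF : ∀ c ∈ F, InBoxBoundary x₀ x₁ y₀ y₁ c := fun c =>
    inBoxBoundary_of_mem_frame hX hY hx.le hy.le
  have : Nonempty (Fin q) := ⟨⟨0, hq⟩⟩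
  choose! f hf using hcov
  have hfib : ∀ t, #(F.filter (f · = t)) = 2 := by
    refine card_filter_eq_two_of_le_two (fun t => ?_) ?_
    · refine (card_le_card fun c hc => ?_).trans (card_filter_onDiag_le_two hF (Sum.map S D t))
      rw [mem_filter] at hc ⊢
      exact ⟨hc.1, hc.2 ▸ hf c hc.1⟩
    · simp only [Fintype.card_sum, Fintype.card_fin]
      omega
  have hcardF : #F = 4 * q := by
    rw [card_eq_sum_card_fiberwise (t := univ) fun c _ => mem_coe.2 (mem_univ (f c)),
      sum_congr rfl fun t _ => hfib t, sum_const, card_univ, Fintype.card_sum, Fintype.card_fin,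
      smul_eq_mul]
    ring
  have hsum : ∑ c ∈ F, perimeterCoord x₀ x₁ y₀ c ≡ q * (2 * (x₁ - x₀))
      [ZMOD 2 * ((x₁ - x₀) + (y₁ - y₀))] := by
    have := sum_modEq_of_card_filter_eq_two hfib (g := perimeterCoord x₀ x₁ y₀)
      (v := fun t => diagShift x₀ x₁ (Sum.map S D t)) fun a ha b hb hab hfab =>
        perimeterCoord_add_modEq_diagShift (hF a ha) (hF b hb) hab (hf a ha) (hfab ▸ hf b hb)
    simpa [Fintype.sum_sum_type, diagShift] using this
  rw [sum_perimeterCoord_frame hx.ne hy.ne] at hsum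
  rw [card_frame hx.ne hy.ne] at hcardF
  have hab : #(X \ {x₀, x₁}) + #Y = 2 * q := by omega
  exact ⟨hab, even_of_sub_modEq (by omega) hab hsum⟩

end Frame

def uncovered {p : ℕ} (m : ℕ) (C : Fin p → ℕ) : Finset ℤ :=
  (range m \ univ.image C).image (↑)

theorem le_card_uncovered {p : ℕ} (m : ℕ) (C : Fin p → ℕ) : m ≤ #(uncovered m C) + p := by
  rw [uncovered, card_image_of_injective _ Nat.cast_injective]
  have h1 := le_card_sdiff (univ.image C) (range m)
  have h2 : #(univ.image C) ≤ p := card_image_le.trans_eq (card_fin p)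
  rw [card_range] at h1
  omega

theorem exists_onDiag_of_cover {m n p : ℕ} {R C : Fin p → ℕ} {S D : Fin p → ℤ}
    (hcover : ∀ x y : ℕ, x < m → y < n →
      ∃ i : Fin p, y = R i ∨ x = C i ∨ (x : ℤ) + y = S i ∨ (x : ℤ) - y = D i)
    {c : ℤ × ℤ} (hc : c ∈ uncovered m C ×ˢ uncovered n R) : ∃ t, OnDiag (Sum.map S D t) c := by
  obtain ⟨_, _⟩ := c
  obtain ⟨⟨x, ⟨hxm, hxC⟩, rfl⟩, ⟨y, ⟨hyn, hyR⟩, rfl⟩⟩ := by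
    simpa only [uncovered, mem_product, mem_image, mem_sdiff, mem_range, mem_univ, true_and]
      using hc
  obtain ⟨i, h | h | h | h⟩ := hcover x y hxm hyn
  · exact absurd ⟨i, h.symm⟩ hyR
  · exact absurd ⟨i, h.symm⟩ hxC
  · exact ⟨.inl i, h⟩
  · exact ⟨.inr i, h⟩

end QueenCover

open QueenCover

theorem relaxed_queens_rect_even_improved_general (m n p : ℕ) (hm : Even m)
    (hmod : (m + n) % 8 = 6) (hnontriv : max m n < 3 * min m n - 2)
    (R C : Fin p → ℕ) (S D : Fin p → ℤ)
    (hcover : ∀ x y : ℕ, x < m → y < n →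
      ∃ i : Fin p, y = R i ∨ x = C i ∨ (x : ℤ) + y = S i ∨ (x : ℤ) - y = D i) :
    p ≥ (m + n - 2) / 4 + 1 := by
  by_contra! hp
  have hXm := le_card_uncovered m C
  have hYn := le_card_uncovered n R
  obtain ⟨x₀, hx₀, x₁, hx₁, hx, hX⟩ := exists_mem_lt_subset_Icc (s := uncovered m C) (by omega)
  obtain ⟨y₀, hy₀, y₁, hy₁, hy, hY⟩ := exists_mem_lt_subset_Icc (s := uncovered n R) (by omega)
  obtain ⟨i, -⟩ := hcover 0 0 (by omega) (by omega)
  have hX₀₁ : #(uncovered m C \ {x₀, x₁}) = #(uncovered m C) - 2 := by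
    rw [card_sdiff_of_subset (insert_subset hx₀ (singleton_subset_iff.2 hx₁)), card_pair hx.ne]
  obtain ⟨hcard, r, hr⟩ := card_add_card_eq_and_even_of_frame_cover i.pos S D hX hY hx hy
    (fun c hc => exists_onDiag_of_cover hcover (frame_subset hx₀ hx₁ hy₀ hy₁ hc))
    (by rw [card_frame hx.ne hy.ne]; omega)
  obtain ⟨a, rfl⟩ := hm
  omega

/-- If `m, n` are even, `m + n ≡ 6 [MOD 8]` and `max m n < 3 * min m n - 2`, then
any cover of the `m × n` board by `p` rows, `p` columns, `p` sum diagonals and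
`p` difference diagonals satisfies `p ≥ (m+n-2)/4 + 1`. -/
theorem relaxed_queens_rect_even_improved (m n p : ℕ) (hm : Even m) (hn : Even n)
    (hmod : (m + n) % 8 = 6) (hnontriv : max m n < 3 * min m n - 2)
    (R C : Fin p → ℕ) (S D : Fin p → ℤ)
    (hcover : ∀ x y : ℕ, x < m → y < n →
      ∃ i : Fin p, y = R i ∨ x = C i ∨ (x : ℤ) + y = S i ∨ (x : ℤ) - y = D i) :
    p ≥ (m + n - 2) / 4 + 1 :=
  relaxed_queens_rect_even_improved_general m n p hm hmod hnontriv R C S D hcover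
end

section
/- Suppose n = 4k+3 and p = 2k+1 rows, p columns, p sum diagonals and p difference diagonals cover the n × n board. Then the p chosen rows are pairwise distinct, the p chosen columns are pairwise distinct, the p chosen sum diagonals are pairwise distinct, and the p chosen difference diagonals are pairwise distinct. -/
/-!
The cells of the board left uncovered by the chosen rows and columns form a grid `X ×ˢ Y` with
`#X, #Y ≥ n - p`, which must be covered by the diagonals alone. On the boundary of the bounding
box of that grid there are `2 #X + 2 #Y - 4` cells, and every diagonal meets this boundary in at
most two of them, so `#X + #Y ≤ #S + #D + 2`. Hence the numbers of distinct rows, columns, sum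
and difference diagonals add up to at least `2n - 2 = 4p`, which forces each of the four families
to consist of `p` distinct lines.
-/

open Finset

def gridFrame (X Y : Finset ℤ) (a₀ a₁ b₀ b₁ : ℤ) : Finset (ℤ × ℤ) :=
  (X ×ˢ Y).filter fun p => p.1 = a₀ ∨ p.1 = a₁ ∨ p.2 = b₀ ∨ p.2 = b₁

section gridFrame

variable {X Y : Finset ℤ} {a₀ a₁ b₀ b₁ : ℤ}

/-- On a sum diagonal, the frame cells in column `a₀` or row `b₁` are both its leftmost cell in the
box, and those in column `a₁` or row `b₀` its rightmost one. -/
theorem card_filter_gridFrame_add_eq_le_two (hX : ∀ x ∈ X, a₀ ≤ x ∧ x ≤ a₁)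
    (hY : ∀ y ∈ Y, b₀ ≤ y ∧ y ≤ b₁) (s : ℤ) :
    #((gridFrame X Y a₀ a₁ b₀ b₁).filter fun p => p.1 + p.2 = s) ≤ 2 := by
  refine card_le_card_of_injOn (fun p => decide (p.1 = a₀ ∨ p.2 = b₁)) (t := univ)
    (fun _ _ => mem_coe.mpr (mem_univ _)) ?_
  intro p hp q hq hpq
  simp only [gridFrame, coe_filter, mem_filter, mem_product, Set.mem_ofPred_eq] at hp hq
  have := hX _ hp.1.1.1; have := hX _ hq.1.1.1; have := hY _ hp.1.1.2; have := hY _ hq.1.1.2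
  simp only [decide_eq_decide] at hpq
  exact Prod.ext (by omega) (by omega)

theorem card_filter_gridFrame_sub_eq_le_two (hX : ∀ x ∈ X, a₀ ≤ x ∧ x ≤ a₁)
    (hY : ∀ y ∈ Y, b₀ ≤ y ∧ y ≤ b₁) (t : ℤ) :
    #((gridFrame X Y a₀ a₁ b₀ b₁).filter fun p => p.1 - p.2 = t) ≤ 2 := by
  refine card_le_card_of_injOn (fun p => decide (p.1 = a₀ ∨ p.2 = b₀)) (t := univ)
    (fun _ _ => mem_coe.mpr (mem_univ _)) ?_
  intro p hp q hq hpq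
  simp only [gridFrame, coe_filter, mem_filter, mem_product, Set.mem_ofPred_eq] at hp hq
  have := hX _ hp.1.1.1; have := hX _ hq.1.1.1; have := hY _ hp.1.1.2; have := hY _ hq.1.1.2
  simp only [decide_eq_decide] at hpq
  exact Prod.ext (by omega) (by omega)

theorem le_card_gridFrame (ha : a₀ ≠ a₁) (hb : b₀ ≠ b₁) (ha₀ : a₀ ∈ X) (ha₁ : a₁ ∈ X)
    (hb₀ : b₀ ∈ Y) (hb₁ : b₁ ∈ Y) :
    2 * #X + 2 * #Y ≤ #(gridFrame X Y a₀ a₁ b₀ b₁) + 4 := by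
  have hsub : {a₀, a₁} ×ˢ Y ∪ (X \ {a₀, a₁}) ×ˢ {b₀, b₁} ⊆ gridFrame X Y a₀ a₁ b₀ b₁ := by
    intro p hp
    simp only [gridFrame, mem_union, mem_product, mem_insert, mem_singleton, mem_sdiff,
      mem_filter] at hp ⊢
    aesop
  have hdisj : Disjoint ({a₀, a₁} ×ˢ Y) ((X \ {a₀, a₁}) ×ˢ {b₀, b₁}) :=
    disjoint_product.mpr (Or.inl disjoint_sdiff)
  have hcard := card_le_card hsub
  rw [card_union_of_disjoint hdisj, card_product, card_product, card_pair ha, card_pair hb,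
    card_sdiff_of_subset (by simp [insert_subset_iff, ha₀, ha₁]), card_pair ha] at hcard
  omega

end gridFrame

theorem card_add_card_le_of_forall_add_mem_or_sub_mem_s15 {X Y S D : Finset ℤ}
    (hX : 2 ≤ #X) (hY : 2 ≤ #Y) (hcov : ∀ x ∈ X, ∀ y ∈ Y, x + y ∈ S ∨ x - y ∈ D) :
    #X + #Y ≤ #S + #D + 2 := by
  have hXne : X.Nonempty := card_pos.mp (by omega)
  have hYne : Y.Nonempty := card_pos.mp (by omega)
  have hXbox : ∀ x ∈ X, X.min' hXne ≤ x ∧ x ≤ X.max' hXne :=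
    fun x hx => ⟨min'_le X x hx, le_max' X x hx⟩
  have hYbox : ∀ y ∈ Y, Y.min' hYne ≤ y ∧ y ≤ Y.max' hYne :=
    fun y hy => ⟨min'_le Y y hy, le_max' Y y hy⟩
  set F := gridFrame X Y (X.min' hXne) (X.max' hXne) (Y.min' hYne) (Y.max' hYne)
  have hF : F ⊆ S.biUnion (fun s => F.filter fun p => p.1 + p.2 = s) ∪
      D.biUnion (fun t => F.filter fun p => p.1 - p.2 = t) := by
    intro p hp
    have hpXY := mem_product.mp (mem_filter.mp hp).1
    simp only [mem_union, mem_biUnion, mem_filter, exists_eq_right_right', and_comm (b := p ∈ F)]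
    simpa [hp] using hcov p.1 hpXY.1 p.2 hpXY.2
  have hframe : 2 * #X + 2 * #Y ≤ #F + 4 := le_card_gridFrame (min'_lt_max'_of_card X (by omega)).ne
    (min'_lt_max'_of_card Y (by omega)).ne (min'_mem X hXne) (max'_mem X hXne)
    (min'_mem Y hYne) (max'_mem Y hYne)
  have hdiag : #F ≤ #S * 2 + #D * 2 :=
    (card_le_card hF).trans <| (card_union_le _ _).trans <| add_le_add
      (card_biUnion_le_card_mul _ _ _ fun s _ => card_filter_gridFrame_add_eq_le_two hXbox hYbox s)
      (card_biUnion_le_card_mul _ _ _ fun t _ => card_filter_gridFrame_sub_eq_le_two hXbox hYbox t)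
  omega

theorem two_mul_le_card_lines_of_cover {n : ℕ} {R C : Finset ℕ} {S D : Finset ℤ}
    (hR : #R + 2 ≤ n) (hC : #C + 2 ≤ n)
    (hcover : ∀ x < n, ∀ y < n, y ∈ R ∨ x ∈ C ∨ (x : ℤ) + y ∈ S ∨ (x : ℤ) - y ∈ D) :
    2 * n ≤ #R + #C + #S + #D + 2 := by
  set X := (range n \ C).image (Nat.cast : ℕ → ℤ)
  set Y := (range n \ R).image (Nat.cast : ℕ → ℤ)
  have hXcard : n - #C ≤ #X := by
    rw [card_image_of_injective _ Nat.cast_injective]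
    simpa using le_card_sdiff C (range n)
  have hYcard : n - #R ≤ #Y := by
    rw [card_image_of_injective _ Nat.cast_injective]
    simpa using le_card_sdiff R (range n)
  have hcov : ∀ x ∈ X, ∀ y ∈ Y, x + y ∈ S ∨ x - y ∈ D := by
    simp only [X, Y, mem_image, mem_sdiff, mem_range]
    rintro _ ⟨x, ⟨hx, hxC⟩, rfl⟩ _ ⟨y, ⟨hy, hyR⟩, rfl⟩
    simpa [hxC, hyR] using hcover x hx y hy
  have := card_add_card_le_of_forall_add_mem_or_sub_mem_s15 (by omega) (by omega) hcov
  omega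

theorem injective_of_card_image_univ {α : Type*} [DecidableEq α] {m : ℕ} {f : Fin m → α}
    (h : m ≤ #(univ.image f)) : Function.Injective f := by
  have hcard : #(univ.image f) = #(univ : Finset (Fin m)) :=
    le_antisymm card_image_le (by simpa using h)
  simpa using card_image_iff.mp hcard

theorem relaxed_queens_4k3_distinct_lines_general (k : ℕ)
    (R C : Fin (2 * k + 1) → ℕ) (S D : Fin (2 * k + 1) → ℤ)
    (hcover : ∀ x y : ℕ, x < 4 * k + 3 → y < 4 * k + 3 →
      ∃ i, y = R i ∨ x = C i ∨ (x : ℤ) + y = S i ∨ (x : ℤ) - y = D i) :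
    Function.Injective R ∧ Function.Injective C ∧
      Function.Injective S ∧ Function.Injective D := by
  have hR : #(univ.image R) ≤ 2 * k + 1 := card_image_le.trans_eq (card_fin _)
  have hC : #(univ.image C) ≤ 2 * k + 1 := card_image_le.trans_eq (card_fin _)
  have hS : #(univ.image S) ≤ 2 * k + 1 := card_image_le.trans_eq (card_fin _)
  have hD : #(univ.image D) ≤ 2 * k + 1 := card_image_le.trans_eq (card_fin _)
  have hlines := two_mul_le_card_lines_of_cover (n := 4 * k + 3) (R := univ.image R)
      (C := univ.image C) (S := univ.image S) (D := univ.image D) (by omega) (by omega)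
      fun x hx y hy => by
    obtain ⟨i, h | h | h | h⟩ := hcover x y hx hy <;> simp [h]
  exact ⟨injective_of_card_image_univ (by omega), injective_of_card_image_univ (by omega),
    injective_of_card_image_univ (by omega), injective_of_card_image_univ (by omega)⟩

/-- If `n = 4k+3` and `p = 2k+1` rows, columns, sum diagonals and difference
diagonals of the `n × n` board cover it, then the chosen rows are pairwise
distinct, and similarly for columns, sum diagonals and difference diagonals. -/
theorem relaxed_queens_4k3_distinct_lines (k : ℕ)
    (R C : Fin (2 * k + 1) → ℕ) (S D : Fin (2 * k + 1) → ℤ)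
    (hR : ∀ i, R i < 4 * k + 3) (hC : ∀ i, C i < 4 * k + 3)
    (hS : ∀ i, 0 ≤ S i ∧ S i ≤ 2 * (4 * k + 3) - 2)
    (hD : ∀ i, -((4 * k + 3 : ℤ) - 1) ≤ D i ∧ D i ≤ (4 * k + 3 : ℤ) - 1)
    (hcover : ∀ x y : ℕ, x < 4 * k + 3 → y < 4 * k + 3 →
      ∃ i, y = R i ∨ x = C i ∨ (x : ℤ) + y = S i ∨ (x : ℤ) - y = D i) :
    Function.Injective R ∧ Function.Injective C ∧
      Function.Injective S ∧ Function.Injective D :=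
  relaxed_queens_4k3_distinct_lines_general k R C S D hcover
end

section
/- Suppose n = 4k+3 and p = 2k+1 rows, p columns, p sum diagonals and p difference diagonals cover the n × n board. Let l, r be the leftmost and rightmost unchosen columns and b, t the bottommost and topmost unchosen rows. Then r − l = t − b, i.e., the sub-board bounded by the extreme unchosen rows and columns is square. -/
/-!
There are at least `n - p = 2k + 2` unchosen columns and as many unchosen rows. If
`r - l > t - b`, the `2 (2k + 2)` cells in columns `l`, `r` and unchosen rows avoid every chosen
row and column, and no diagonal meets two of them, because the rows of two such cells differ
by at most `t - b < r - l`; but only `2p = 4k + 2` diagonals are available. The case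
`r - l < t - b` is the same argument with rows and columns exchanged.
-/

open Finset

lemma card_le_of_diagonals_cover_two_columns {ι : Type*} [Fintype ι] (S D : ι → ℤ)
    {c₁ c₂ b t : ℕ} {Y : Finset ℕ} (hY : ∀ y ∈ Y, b ≤ y ∧ y ≤ t) (hwide : c₁ + t < c₂ + b)
    (hcov : ∀ c ∈ ({c₁, c₂} : Finset ℕ), ∀ y ∈ Y, ∃ i, (c : ℤ) + y = S i ∨ (c : ℤ) - y = D i) :
    #Y ≤ Fintype.card ι := by
  obtain rfl | ⟨y₀, hy₀⟩ := Y.eq_empty_or_nonempty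
  · simp
  have hne : c₁ ≠ c₂ := by have := hY y₀ hy₀; omega
  have hcells : #(({c₁, c₂} : Finset ℕ) ×ˢ Y) = 2 * #Y := by
    rw [card_product, card_pair hne]
  -- The two columns are further apart than the rows of any two cells,
  -- so each diagonal meets at most one cell.
  have := card_le_card_of_forall_subsingleton
    (fun (q : ℕ × ℕ) ↦ Sum.elim (fun i ↦ (q.1 : ℤ) + q.2 = S i) (fun i ↦ (q.1 : ℤ) - q.2 = D i))
    (s := ({c₁, c₂} : Finset ℕ) ×ˢ Y) (t := univ)
    (fun q hq ↦ by
      obtain ⟨hc, hy⟩ := mem_product.1 hq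
      obtain ⟨i, hi | hi⟩ := hcov q.1 hc q.2 hy
      exacts [⟨.inl i, mem_univ _, hi⟩, ⟨.inr i, mem_univ _, hi⟩])
    (fun ℓ _ q hq q' hq' ↦ by
      simp only [mem_product, mem_insert, mem_singleton, Set.mem_ofPred_eq] at hq hq'
      obtain ⟨⟨hc, hy⟩, hq⟩ := hq
      obtain ⟨⟨hc', hy'⟩, hq'⟩ := hq'
      have := hY _ hy; have := hY _ hy'
      cases ℓ <;> simp only [Sum.elim_inl, Sum.elim_inr] at hq hq' <;>
        exact Prod.ext (by omega) (by omega))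
  simp only [card_univ, Fintype.card_sum] at this
  omega

def unchosen {ι : Type*} [Fintype ι] (f : ι → ℕ) (n : ℕ) : Finset ℕ :=
  {x ∈ range n | ∀ i, f i ≠ x}

section unchosen

variable {ι : Type*} [Fintype ι] (f : ι → ℕ) (n : ℕ)

@[simp] lemma mem_unchosen {x : ℕ} : x ∈ unchosen f n ↔ x < n ∧ ∀ i, f i ≠ x := by
  simp [unchosen]

lemma coe_unchosen : (unchosen f n : Set ℕ) = {x | x < n ∧ ∀ i, f i ≠ x} := by
  ext; simp

lemma sub_card_le_card_unchosen : n - Fintype.card ι ≤ #(unchosen f n) := by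
  classical
  have : unchosen f n = range n \ univ.image f := by ext; simp [eq_comm]
  calc n - Fintype.card ι ≤ #(range n) - #(univ.image f) := by
        grw [card_range, card_image_le, card_univ]
    _ ≤ #(unchosen f n) := this ▸ le_card_sdiff _ _

end unchosen

lemma card_unchosen_le_of_narrow {ι : Type*} [Fintype ι] {n : ℕ} (R C : ι → ℕ) (S D : ι → ℤ)
    (hcover : ∀ x y : ℕ, x < n → y < n →
      ∃ i, y = R i ∨ x = C i ∨ (x : ℤ) + y = S i ∨ (x : ℤ) - y = D i)
    {l r b t : ℕ} (hl : l ∈ unchosen C n) (hr : r ∈ unchosen C n)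
    (hrows : ∀ y ∈ unchosen R n, b ≤ y ∧ y ≤ t) (hnarrow : l + t < r + b) :
    #(unchosen R n) ≤ Fintype.card ι := by
  refine card_le_of_diagonals_cover_two_columns S D hrows hnarrow fun c hc y hy ↦ ?_
  obtain ⟨hcn, hcC⟩ : c < n ∧ ∀ i, C i ≠ c := by
    rw [mem_insert, mem_singleton] at hc
    rcases hc with rfl | rfl
    exacts [(mem_unchosen C n).1 hl, (mem_unchosen C n).1 hr]
  rw [mem_unchosen] at hy
  obtain ⟨i, hi | hi | hi⟩ := hcover c y hcn hy.1
  exacts [absurd hi.symm (hy.2 i), absurd hi.symm (hcC i), ⟨i, hi⟩]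

theorem relaxed_queens_4k3_square_subboard_general (k : ℕ)
    (R C : Fin (2 * k + 1) → ℕ) (S D : Fin (2 * k + 1) → ℤ)
    (hcover : ∀ x y : ℕ, x < 4 * k + 3 → y < 4 * k + 3 →
      ∃ i, y = R i ∨ x = C i ∨ (x : ℤ) + y = S i ∨ (x : ℤ) - y = D i)
    (l r b t : ℕ)
    (hl : IsLeast {x : ℕ | x < 4 * k + 3 ∧ ∀ i, C i ≠ x} l)
    (hr : IsGreatest {x : ℕ | x < 4 * k + 3 ∧ ∀ i, C i ≠ x} r)
    (hb : IsLeast {y : ℕ | y < 4 * k + 3 ∧ ∀ i, R i ≠ y} b)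
    (ht : IsGreatest {y : ℕ | y < 4 * k + 3 ∧ ∀ i, R i ≠ y} t) :
    r - l = t - b := by
  rw [← coe_unchosen] at hl hr hb ht
  have hcols := sub_card_le_card_unchosen C (4 * k + 3)
  have hrows := sub_card_le_card_unchosen R (4 * k + 3)
  simp only [Fintype.card_fin] at hcols hrows
  have hlr : l ≤ r := hr.2 hl.1
  have hbt : b ≤ t := ht.2 hb.1
  rcases lt_trichotomy (l + t) (r + b) with h | h | h
  · have := card_unchosen_le_of_narrow R C S D hcover hl.1 hr.1
      (fun y hy ↦ ⟨hb.2 hy, ht.2 hy⟩) h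
    rw [Fintype.card_fin] at this
    omega
  · omega
  · -- Reflecting the board in the main diagonal exchanges rows and columns and negates `x - y`.
    have := card_unchosen_le_of_narrow C R S (-D)
      (fun x y hx hy ↦ by
        obtain ⟨i, hi⟩ := hcover y x hy hx
        exact ⟨i, by simp only [Pi.neg_apply]; omega⟩)
      hb.1 ht.1 (fun x hx ↦ ⟨hl.2 hx, hr.2 hx⟩) (by omega)
    rw [Fintype.card_fin] at this
    omega

/-- If `n = 4k+3` and `p = 2k+1` rows, columns, sum diagonals and difference
diagonals cover the `n × n` board, and `l, r` are the leftmost and rightmost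
unchosen columns while `b, t` are the bottommost and topmost unchosen rows,
then `r - l = t - b`: the sub-board bounded by them is square. -/
theorem relaxed_queens_4k3_square_subboard (k : ℕ)
    (R C : Fin (2 * k + 1) → ℕ) (S D : Fin (2 * k + 1) → ℤ)
    (hR : ∀ i, R i < 4 * k + 3) (hC : ∀ i, C i < 4 * k + 3)
    (hcover : ∀ x y : ℕ, x < 4 * k + 3 → y < 4 * k + 3 →
      ∃ i, y = R i ∨ x = C i ∨ (x : ℤ) + y = S i ∨ (x : ℤ) - y = D i)
    (l r b t : ℕ)
    (hl : IsLeast {x : ℕ | x < 4 * k + 3 ∧ ∀ i, C i ≠ x} l)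
    (hr : IsGreatest {x : ℕ | x < 4 * k + 3 ∧ ∀ i, C i ≠ x} r)
    (hb : IsLeast {y : ℕ | y < 4 * k + 3 ∧ ∀ i, R i ≠ y} b)
    (ht : IsGreatest {y : ℕ | y < 4 * k + 3 ∧ ∀ i, R i ≠ y} t) :
    r - l = t - b :=
  relaxed_queens_4k3_square_subboard_general k R C S D hcover l r b t hl hr hb ht
end
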